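/- arXiv:1912.03952 — 6 statements merged into one kernel-verified Lean document; each statement's English description precedes it below -/
import Mathlib

section
/- Let r ≥ 2 and let a_1, …, a_r ≥ 1 be integers. Let H = {z ∈ ℤ^r : Σ_{i=1}^r a_i z_i = 0}. Then H is a free ℤ-module of rank r−1, and for every ℤ-basis (f_1, …, f_{r−1}) of H, the determinant of the Gram matrix (⟨f_i, f_j⟩)_{1≤i,j≤r−1} (Euclidean inner products in ℝ^r) equals (Σ_{i=1}^r a_i²) / gcd(a_1,…,a_r)². Equivalently, the (r−1)-dimensional Euclidean volume of the fundamental parallelotope Σ_{j=1}^{r−1}[0,1]·f_j is √(Σ_{i=1}^r a_i²) / gcd(a_1,…,a_r). -/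
/-!
Dividing `a` by its gcd `d` does not change `H`, so we may assume `a` primitive and pick `v` with
`a ⬝ᵥ v = 1`. Then `ℤ^r = H ⊕ ℤ v`, so a basis `f` of `H` extends by `v` to a basis `B` of `ℤ^r`,
whose determinant `δ` in the standard basis is `±1`. Replacing `v` by `a` in `B` multiplies the determinant
by the `v`-coordinate of `a`, which is `a ⬝ᵥ a`. The matrix of inner products of `(f, a)` against
`(f, v)` is block triangular with diagonal blocks `Gram(f)` and `a ⬝ᵥ v = 1`, so
`det Gram(f) = δ (a ⬝ᵥ a) · δ = a ⬝ᵥ a`. Undoing the division by `d` gives the factor `1 / d²`.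
-/

open Module LinearMap Matrix

namespace LinearMap

variable {R M : Type*} [Ring R] [AddCommGroup M] [Module R M]

noncomputable def kerProdEquivOfApplyEqOne (φ : M →ₗ[R] R) {v : M} (hv : φ v = 1) :
    (ker φ × R) ≃ₗ[R] M :=
  LinearEquiv.ofLinearMap ((ker φ).subtype.coprod (toSpanSingleton R M v))
    (((id - (toSpanSingleton R M v).comp φ).codRestrict (ker φ) fun z => by simp [hv]).prod φ)
    (by ext; simp) (by ext <;> simp [hv])

lemma finrank_ker_add_one_of_apply_eq_one [StrongRankCondition R] (φ : M →ₗ[R] R)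
    [Free R (ker φ)] [Module.Finite R (ker φ)] {v : M} (hv : φ v = 1) :
    finrank R (ker φ) + 1 = finrank R M := by
  rw [← (kerProdEquivOfApplyEqOne φ hv).finrank_eq, finrank_prod, finrank_self]

end LinearMap

namespace Module.Basis

section Ring

variable {κ R M : Type*} [Ring R] [AddCommGroup M] [Module R M]
  {φ : M →ₗ[R] R} {v : M} (hv : φ v = 1) (b : Basis κ R (ker φ))

noncomputable def extendOfApplyEqOne : Basis (κ ⊕ Unit) R M :=
  (b.prod (Basis.singleton Unit R)).map (φ.kerProdEquivOfApplyEqOne hv)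

@[simp]
lemma extendOfApplyEqOne_inl (i : κ) : b.extendOfApplyEqOne hv (.inl i) = b i := by
  simp [extendOfApplyEqOne, kerProdEquivOfApplyEqOne]

@[simp]
lemma extendOfApplyEqOne_inr (t : Unit) : b.extendOfApplyEqOne hv (.inr t) = v := by
  simp [extendOfApplyEqOne, kerProdEquivOfApplyEqOne]

lemma extendOfApplyEqOne_repr_inr (z : M) (t : Unit) :
    (b.extendOfApplyEqOne hv).repr z (.inr t) = φ z := by
  simp [extendOfApplyEqOne, kerProdEquivOfApplyEqOne]

end Ring

lemma det_update {ι R M : Type*} [Fintype ι] [DecidableEq ι] [CommRing R] [AddCommGroup M]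
    [Module R M] (e : Basis ι R M) (i : ι) (x : M) :
    e.det (Function.update e i x) = e.repr x i := by
  rw [det_apply, toMatrix_update, toMatrix_self, ← cramer_apply, cramer_one]
  rfl

end Module.Basis

lemma Matrix.det_of_dotProduct {ι κ R : Type*} [Fintype ι] [DecidableEq ι] [Fintype κ]
    [DecidableEq κ] [CommRing R] (e : ι ≃ κ) (v w : κ → ι → R) :
    (of fun p q => v p ⬝ᵥ w q).det =
      ((Pi.basisFun R ι).reindex e).det v * ((Pi.basisFun R ι).reindex e).det w := by
  rw [Basis.det_reindex, Basis.det_reindex, Pi.basisFun_det_apply, Pi.basisFun_det_apply,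
    ← det_transpose (of (w ∘ e)), ← det_mul, ← det_submatrix_equiv_self e]
  rfl

section Integer

variable {ι : Type*} [Fintype ι]

lemma linearCombination_eq_dotProduct (u z : ι → ℤ) :
    Fintype.linearCombination ℤ u z = u ⬝ᵥ z := by
  simp [Fintype.linearCombination_apply, dotProduct, mul_comm]

theorem det_gram_basis_ker_eq_dotProduct_self [DecidableEq ι] {κ : Type*} [Fintype κ]
    [DecidableEq κ] {u v : ι → ℤ} (hv : Fintype.linearCombination ℤ u v = 1)
    {H : Submodule ℤ (ι → ℤ)} (hH : H = ker (Fintype.linearCombination ℤ u)) (b : Basis κ ℤ H) :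
    (of fun i j => (b i : ι → ℤ) ⬝ᵥ b j).det = u ⬝ᵥ u := by
  subst hH
  set B := b.extendOfApplyEqOne hv with hB
  set E := (Pi.basisFun ℤ ι).reindex ((Pi.basisFun ℤ ι).indexEquiv B)
  set W := Function.update B (.inr ()) u
  have hgram : (of fun i j => (b i : ι → ℤ) ⬝ᵥ b j).det = (of fun p q => W p ⬝ᵥ B q).det := by
    have hblocks : (of fun p q => W p ⬝ᵥ B q) =
        fromBlocks (of fun i j => (b i : ι → ℤ) ⬝ᵥ b j) (of fun i _ => (b i : ι → ℤ) ⬝ᵥ v) 0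
          (of fun _ _ => u ⬝ᵥ v) := by
      ext (i | i) (j | j) <;> simp [W, hB, ← linearCombination_eq_dotProduct]
    rw [hblocks, det_fromBlocks_zero₂₁, det_unique (n := Unit), of_apply,
      ← linearCombination_eq_dotProduct, hv, mul_one]
  have hW : E.det W = E.det B * u ⬝ᵥ u := by
    conv_lhs => rw [E.det.eq_smul_basis_det B]
    rw [AlternatingMap.smul_apply, smul_eq_mul, Basis.det_update,
      Basis.extendOfApplyEqOne_repr_inr, linearCombination_eq_dotProduct]
  rw [hgram, det_of_dotProduct, hW, mul_right_comm, Int.isUnit_mul_self (E.isUnit_det B), one_mul]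

lemma exists_linearCombination_eq_one_of_gcd_eq_one {u : ι → ℤ}
    (hu : Finset.univ.gcd u = 1) : ∃ v, Fintype.linearCombination ℤ u v = 1 := by
  obtain ⟨v, hv⟩ := Finset.gcd_eq_sum_mul Finset.univ u
  exact ⟨v, by simp [Fintype.linearCombination_apply, ← hu, hv, mul_comm]⟩

lemma ker_linearCombination_smul (u : ι → ℤ) {d : ℤ} (hd : d ≠ 0) :
    ker (Fintype.linearCombination ℤ (d • u)) = ker (Fintype.linearCombination ℤ u) := by
  ext z
  rw [mem_ker, mem_ker, linearCombination_eq_dotProduct, linearCombination_eq_dotProduct,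
    smul_dotProduct, smul_eq_zero, or_iff_right hd]

end Integer

/-- Let `r ≥ 2` and `a₁, …, a_r ≥ 1` be integers, and let
`H = {z ∈ ℤ^r : ∑ i, a i * z i = 0}` (the kernel of the linear form `z ↦ ∑ i, z i • a i`).
Then `H` is a free `ℤ`-module of rank `r - 1`, and for every `ℤ`-basis `(f₁, …, f_{r-1})` of `H`,
the determinant of the Gram matrix `(⟨f i, f j⟩)` of Euclidean inner products in `ℝ^r` equals
`(∑ i, a i ^ 2) / gcd (a₁, …, a_r) ^ 2`; equivalently, the `(r-1)`-dimensional volume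
`√(det Gram)` of the fundamental parallelotope equals `√(∑ i, a i ^ 2) / gcd (a₁, …, a_r)`. -/
theorem stmt0 (r : ℕ) (hr : 2 ≤ r) (a : Fin r → ℤ) (ha : ∀ i, 1 ≤ a i) :
    Module.Free ℤ (LinearMap.ker (Fintype.linearCombination ℤ a)) ∧
    Module.finrank ℤ (LinearMap.ker (Fintype.linearCombination ℤ a)) = r - 1 ∧
    ∀ b : Module.Basis (Fin (r - 1)) ℤ (LinearMap.ker (Fintype.linearCombination ℤ a)),
      (Matrix.of fun i j : Fin (r - 1) =>
          ∑ k, (((b i : Fin r → ℤ) k : ℝ) * ((b j : Fin r → ℤ) k : ℝ))).det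
        = (∑ i, (a i : ℝ) ^ 2) / ((Finset.univ.gcd a : ℤ) : ℝ) ^ 2 ∧
      Real.sqrt
          (Matrix.of fun i j : Fin (r - 1) =>
            ∑ k, (((b i : Fin r → ℤ) k : ℝ) * ((b j : Fin r → ℤ) k : ℝ))).det
        = Real.sqrt (∑ i, (a i : ℝ) ^ 2) / ((Finset.univ.gcd a : ℤ) : ℝ) := by
  have i₀ : Fin r := ⟨0, by omega⟩
  obtain ⟨a', ha', ha'_gcd⟩ := Finset.extract_gcd a ⟨i₀, Finset.mem_univ _⟩
  set d := Finset.univ.gcd a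
  have hd : d ≠ 0 := fun h => by simpa [Finset.gcd_eq_zero_iff.mp h i₀] using ha i₀
  have hker : ker (Fintype.linearCombination ℤ a) = ker (Fintype.linearCombination ℤ a') := by
    rw [← ker_linearCombination_smul a' hd]
    congr 2
    ext i
    exact ha' i (Finset.mem_univ i)
  obtain ⟨v, hv⟩ := exists_linearCombination_eq_one_of_gcd_eq_one ha'_gcd
  refine ⟨inferInstance, ?_, fun b => ?_⟩
  · have := finrank_ker_add_one_of_apply_eq_one _ hv
    rw [finrank_fin_fun] at this
    rw [hker]
    omega
  have hdet : (Matrix.of fun i j : Fin (r - 1) =>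
      ∑ k, (((b i : Fin r → ℤ) k : ℝ) * ((b j : Fin r → ℤ) k : ℝ))).det
        = (∑ i, (a i : ℝ) ^ 2) / (d : ℝ) ^ 2 := by
    have hsum : ∑ i, (a i : ℝ) ^ 2 = (d : ℝ) ^ 2 * ((a' ⬝ᵥ a' : ℤ) : ℝ) := by
      rw [dotProduct, Int.cast_sum, Finset.mul_sum]
      refine Finset.sum_congr rfl fun i _ => ?_
      rw [ha' i (Finset.mem_univ i)]
      push_cast
      ring
    rw [hsum, mul_div_cancel_left₀ _ (by positivity),
      ← det_gram_basis_ker_eq_dotProduct_self hv hker b, Int.cast_det]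
    congr 1
    ext i j
    simp [dotProduct]
  refine ⟨hdet, ?_⟩
  rw [hdet, Real.sqrt_div' _ (sq_nonneg _), Real.sqrt_sq]
  exact_mod_cast Int.nonneg_of_normalize_eq_self Finset.normalize_gcd
end

section
/- Let r ≥ 2 and let a_1, …, a_r be positive real numbers. Let e_1, …, e_r be the standard basis of ℝ^r, and for 1 ≤ i ≤ r−1 set w_i = (1/a_i)·e_i − (1/a_r)·e_r. Then the determinant of the Gram matrix (⟨w_i, w_j⟩)_{1≤i,j≤r−1} equals (Σ_{i=1}^r a_i²) / (∏_{i=1}^r a_i²). -/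
/-!
The Gram matrix is `diagonal (a i⁻²) + a r⁻² • J` with `J` the all-ones matrix, a rank-one
perturbation of a diagonal matrix, so the matrix determinant lemma gives its determinant as
`(∏ i < r, a i⁻²) * (1 + a r⁻² * ∑ i < r, a i²)`.
-/

open Matrix

theorem Matrix.det_diagonal_add_const {n K : Type*} [Fintype n] [DecidableEq n] [Field K]
    {d : n → K} (hd : ∀ i, d i ≠ 0) (c : K) :
    (diagonal d + of fun _ _ => c).det = (∏ i, d i) * (1 + c * ∑ i, (d i)⁻¹) := by
  have hfactor : diagonal d + of (fun _ _ => c) =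
      diagonal d * (1 + replicateCol Unit (fun i => (d i)⁻¹) * replicateRow Unit fun _ => c) := by
    ext i j
    rw [← vecMulVec_eq, diagonal_mul, add_apply, add_apply, vecMulVec_apply, one_apply,
      diagonal_apply, of_apply, mul_add, mul_inv_cancel_left₀ (hd i)]
    split_ifs <;> simp
  rw [hfactor, det_mul, det_diagonal, det_one_add_replicateCol_mul_replicateRow, dotProduct,
    Finset.mul_sum]

theorem Fin.sum_mul_of_single_sub_single_last {R : Type*} [CommRing R] {n : ℕ}
    (v : Fin (n + 1) → R) (w : Fin n → Fin (n + 1) → R)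
    (hw : ∀ i k, w i k =
      (if k = i.castSucc then v k else 0) - (if k = Fin.last n then v k else 0))
    (i j : Fin n) :
    ∑ k, w i k * w j k = diagonal (fun i => v i.castSucc ^ 2) i j + v (Fin.last n) ^ 2 := by
  rcases eq_or_ne i j with rfl | hij
  · simp [Fin.sum_univ_castSucc, hw, (Fin.castSucc_ne_last _).symm, sq]
  · simp [Fin.sum_univ_castSucc, hw, (Fin.castSucc_ne_last _).symm, sq, hij, hij.symm]

/-- Let `r ≥ 2` and let `a₁, …, a_r` be positive reals. With `e₁, …, e_r` the
standard basis of `ℝ^r`, set `w i = (1 / a i) • e i - (1 / a r) • e r` for `1 ≤ i ≤ r - 1`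
(written coordinatewise below). Then the determinant of the Gram matrix `(⟨w i, w j⟩)` equals
`(∑ i, a i ^ 2) / ∏ i, a i ^ 2`. -/
theorem stmt1 (r : ℕ) (hr : 2 ≤ r) (a : Fin r → ℝ) (ha : ∀ i, 0 < a i)
    (w : Fin (r - 1) → Fin r → ℝ)
    (hw : ∀ (i : Fin (r - 1)) (k : Fin r),
      w i k = (if k = Fin.castLE (Nat.sub_le r 1) i then (a k)⁻¹ else 0)
            - (if (k : ℕ) = r - 1 then (a k)⁻¹ else 0)) :
    (Matrix.of fun i j : Fin (r - 1) => ∑ k, w i k * w j k).det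
      = (∑ i, a i ^ 2) / ∏ i, a i ^ 2 := by
  obtain ⟨n, rfl⟩ : ∃ n, r = n + 1 := ⟨r - 1, by omega⟩
  have hw' : ∀ (i : Fin n) k, w i k =
      (if k = i.castSucc then (a k)⁻¹ else 0) - (if k = Fin.last n then (a k)⁻¹ else 0) := by
    intro i k
    rw [hw]
    simp [Fin.ext_iff]
  have hgram : (of fun i j : Fin n => ∑ k, w i k * w j k) =
      diagonal (fun i => (a i.castSucc)⁻¹ ^ 2) + of fun _ _ => (a (Fin.last n))⁻¹ ^ 2 := by
    ext i j
    exact Fin.sum_mul_of_single_sub_single_last _ w hw' i j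
  have ha0 : ∀ i, a i ≠ 0 := fun i => (ha i).ne'
  have hprod : ∏ i : Fin n, a i.castSucc ^ 2 ≠ 0 :=
    Finset.prod_ne_zero_iff.2 fun i _ => pow_ne_zero 2 (ha0 _)
  have hlast := ha0 (Fin.last n)
  change (of fun i j : Fin n => ∑ k, w i k * w j k).det = _
  rw [hgram, det_diagonal_add_const fun i => by simp [ha0], Fin.sum_univ_castSucc,
    Fin.prod_univ_castSucc]
  simp only [inv_pow, inv_inv, Finset.prod_inv_distrib]
  field_simp
  ring
end

section
/- Let k, r ≥ 1 be integers and let X = (X_{j,l}) be uniformly distributed on Δ_k̄, with Y_j = Σ_{l=1}^r X_{j,l}. Then for all 1 ≤ j, l ≤ k with j ≠ l one has E[Y_j · Y_l] = r/(j · l · k · (kr+1)); in particular E[Y_j · Y_l] ≤ E[Y_j] · E[Y_l], i.e. Y_j and Y_l are negatively correlated. -/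
/-
The weighted simplex is the image of the corner simplex `{y ∈ ℝⁿ | y ≥ 0, ∑ y ≤ 1}`, `n = kr - 1`,
under an injective affine map, so by the area formula for linear maps
(`LinearMap.hausdorffMeasure_image`) its uniform measure is the push-forward of normalised Lebesgue
measure on the corner simplex. Numbering the `kr` coordinates by `σ : Fin (n + 1) ≃ ι`, the point
with barycentric coordinates `s = (1 - ∑ y, y)` is `t_p = s (σ⁻¹ p) / w_p`, and the Dirichlet
integrals `∫ ∏ sᵢ ^ αᵢ = ∏ αᵢ! / (n + ∑ α)!` (slice off one coordinate and use the Beta integral)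
give `E[t_p] = 1 / (kr w_p)` and `E[t_p t_q] = 1 / (kr (kr + 1) w_p w_q)` for `p ≠ q`. Summing over
the `r` coordinates of each block, `E[Y_j Y_l] = kr / (kr + 1) · E[Y_j] E[Y_l]`.
-/

open MeasureTheory

/-- The uniform probability measure on a set `s` of Hausdorff dimension `d`: the
`d`-dimensional Hausdorff measure restricted to `s`, normalized to total mass `1`. -/
noncomputable def uniformOn {E : Type*} [EMetricSpace E] [MeasurableSpace E] [BorelSpace E]
    (d : ℝ) (s : Set E) : Measure E :=
  (μH[d] s)⁻¹ • (μH[d] : Measure E).restrict s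

open Module Set
open scoped ENNReal Nat

theorem integral_pow_mul_sub_pow_succ (c : ℝ) (a m : ℕ) :
    (a + 1) * ∫ t in (0 : ℝ)..c, t ^ a * (c - t) ^ (m + 1)
      = (m + 1) * ∫ t in (0 : ℝ)..c, t ^ (a + 1) * (c - t) ^ m := by
  have hu (t : ℝ) : HasDerivAt (fun t => (c - t) ^ (m + 1)) (-((m + 1) * (c - t) ^ m)) t :=
    (((hasDerivAt_id t).const_sub c).fun_pow (m + 1)).congr_deriv (by simp)
  have hv (t : ℝ) : HasDerivAt (fun t : ℝ => t ^ (a + 1) / ((a : ℝ) + 1)) (t ^ a) t :=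
    ((hasDerivAt_pow (a + 1) t).div_const ((a : ℝ) + 1)).congr_deriv (by field_simp; simp)
  have ibp := intervalIntegral.integral_mul_deriv_eq_deriv_mul (a := 0) (b := c)
    (fun t _ => hu t) (fun t _ => hv t)
    (Continuous.intervalIntegrable (by fun_prop) _ _)
    (Continuous.intervalIntegrable (by fun_prop) _ _)
  simp only [sub_self, zero_pow (Nat.succ_ne_zero _), zero_mul, zero_div, mul_zero, zero_sub,
    ← intervalIntegral.integral_neg] at ibp
  simp_rw [mul_comm (_ ^ a), ibp, ← intervalIntegral.integral_const_mul]
  congr 1; ext t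
  field_simp

theorem integral_pow_mul_sub_pow (c : ℝ) (a m : ℕ) :
    ∫ t in (0 : ℝ)..c, t ^ a * (c - t) ^ m = c ^ (a + m + 1) * (a ! * m !) / (a + m + 1)! := by
  induction m generalizing a with
  | zero =>
    simp [integral_pow, Nat.factorial_succ]
    field_simp
  | succ m ih =>
    have h := integral_pow_mul_sub_pow_succ c a m
    rw [ih (a + 1), show a + 1 + m + 1 = a + (m + 1) + 1 by ring, Nat.factorial_succ a] at h
    rw [Nat.factorial_succ m]
    push_cast at h ⊢
    have : (a : ℝ) + 1 ≠ 0 := by positivity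
    field_simp at h ⊢
    linear_combination h

def cornerSimplex (n : ℕ) (c : ℝ) : Set (Fin n → ℝ) := {y | (∀ i, 0 ≤ y i) ∧ ∑ i, y i ≤ c}

theorem isClosed_cornerSimplex (n : ℕ) (c : ℝ) : IsClosed (cornerSimplex n c) := by
  simp only [cornerSimplex, ofPred_and, ofPred_forall]
  exact (isClosed_iInter fun i => isClosed_le continuous_const (continuous_apply i)).inter
    (isClosed_le (by fun_prop) continuous_const)

theorem cornerSimplex_subset_Icc (n : ℕ) (c : ℝ) : cornerSimplex n c ⊆ Icc 0 (fun _ => c) :=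
  fun _ hy => ⟨hy.1, fun i =>
    (Finset.single_le_sum (fun j _ => hy.1 j) (Finset.mem_univ i)).trans hy.2⟩

theorem isCompact_cornerSimplex (n : ℕ) (c : ℝ) : IsCompact (cornerSimplex n c) :=
  isCompact_Icc.of_isClosed_subset (isClosed_cornerSimplex n c) (cornerSimplex_subset_Icc n c)

theorem cons_mem_cornerSimplex_iff {n : ℕ} {c t : ℝ} {y : Fin n → ℝ} :
    (Fin.cons t y : Fin (n + 1) → ℝ) ∈ cornerSimplex (n + 1) c ↔
      t ∈ Icc 0 c ∧ y ∈ cornerSimplex n (c - t) := by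
  simp only [cornerSimplex, mem_ofPred_eq, Fin.forall_fin_succ, Fin.cons_zero, Fin.cons_succ,
    Fin.sum_univ_succ, mem_Icc]
  constructor
  · rintro ⟨⟨ht, hy⟩, hs⟩
    have := Finset.sum_nonneg fun i (_ : i ∈ Finset.univ) => hy i
    exact ⟨⟨ht, by linarith⟩, hy, by linarith⟩
  · rintro ⟨⟨ht, -⟩, hy, hs⟩
    exact ⟨⟨ht, hy⟩, by linarith⟩

theorem integral_fin_succ_cons {n : ℕ} {f : (Fin (n + 1) → ℝ) → ℝ} (hf : Integrable f) :
    ∫ x, f x = ∫ t, ∫ y, f (Fin.cons t y) := by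
  have e := (volume_preserving_piFinSuccAbove (fun _ : Fin (n + 1) => ℝ) 0).symm
  have he : ∀ z : ℝ × (Fin n → ℝ),
      (MeasurableEquiv.piFinSuccAbove (fun _ : Fin (n + 1) => ℝ) 0).symm z = Fin.cons z.1 z.2 := by
    intro z
    simp [MeasurableEquiv.piFinSuccAbove_symm_apply, Fin.insertNthEquiv, Fin.insertNth_zero']
  rw [← e.integral_comp', Measure.volume_eq_prod, integral_prod]
  · simp only [he]
  · exact (e.integrable_comp_emb (MeasurableEquiv.measurableEmbedding _)).2 hf

theorem setIntegral_cornerSimplex_succ {n : ℕ} {c : ℝ} (hc : 0 ≤ c)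
    {g : (Fin (n + 1) → ℝ) → ℝ} (hg : Continuous g) :
    ∫ x in cornerSimplex (n + 1) c, g x
      = ∫ t in (0 : ℝ)..c, ∫ y in cornerSimplex n (c - t), g (Fin.cons t y) := by
  have hmeas (m : ℕ) (c' : ℝ) := (isClosed_cornerSimplex m c').measurableSet
  rw [← integral_indicator (hmeas _ _), integral_fin_succ_cons
    ((hg.continuousOn.integrableOn_compact (isCompact_cornerSimplex _ _)).integrable_indicator
      (hmeas _ _)),
    intervalIntegral.integral_of_le hc, ← integral_Icc_eq_integral_Ioc,
    ← integral_indicator measurableSet_Icc]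
  congr 1; ext t
  by_cases ht : t ∈ Icc 0 c
  · rw [indicator_of_mem ht, ← integral_indicator (hmeas _ _)]
    congr 1; ext y
    by_cases hy : y ∈ cornerSimplex n (c - t)
    · rw [indicator_of_mem hy, indicator_of_mem (cons_mem_cornerSimplex_iff.2 ⟨ht, hy⟩)]
    · rw [indicator_of_notMem hy,
        indicator_of_notMem fun h => hy (cons_mem_cornerSimplex_iff.1 h).2]
  · simp [indicator, cons_mem_cornerSimplex_iff, ht]

theorem setIntegral_cornerSimplex_prod_pow_mul_pow {n : ℕ} (a : Fin n → ℕ) (b : ℕ) {c : ℝ}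
    (hc : 0 ≤ c) :
    ∫ y in cornerSimplex n c, (∏ i, y i ^ a i) * (c - ∑ i, y i) ^ b
      = c ^ (n + ∑ i, a i + b) * ((∏ i, ((a i)! : ℝ)) * b !) / (n + ∑ i, a i + b)! := by
  induction n generalizing c with
  | zero =>
    have : cornerSimplex 0 c = univ := by simp [cornerSimplex, hc]
    simp [this, Measure.real, volume_pi]
    field_simp
  | succ n ih =>
    set N := n + ∑ i, a (Fin.succ i) + b
    set K : ℝ := (∏ i, ((a (Fin.succ i))! : ℝ)) * b ! / (N ! : ℝ)
    have slice : ∀ t ∈ uIcc 0 c,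
        ∫ y in cornerSimplex n (c - t), (t ^ a 0 * ∏ i, y i ^ a i.succ) * (c - (t + ∑ i, y i)) ^ b
          = t ^ a 0 * (c - t) ^ N * K := by
      intro t ht
      rw [uIcc_of_le hc] at ht
      simp_rw [mul_assoc, ← sub_sub]
      rw [integral_const_mul, ih _ (sub_nonneg.2 ht.2)]
      ring
    rw [setIntegral_cornerSimplex_succ hc (by fun_prop)]
    simp only [Fin.prod_univ_succ, Fin.sum_univ_succ, Fin.cons_zero, Fin.cons_succ]
    rw [intervalIntegral.integral_congr slice, intervalIntegral.integral_mul_const,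
      integral_pow_mul_sub_pow,
      show a 0 + N + 1 = n + 1 + (a 0 + ∑ i : Fin n, a i.succ) + b by omega]
    simp only [K]
    field_simp

def withSlack {n : ℕ} (y : Fin n → ℝ) : Fin (n + 1) → ℝ := Fin.cons (1 - ∑ i, y i) y

theorem setIntegral_cornerSimplex_prod_withSlack_pow {n : ℕ} (α : Fin (n + 1) → ℕ) :
    ∫ y in cornerSimplex n 1, ∏ i, withSlack y i ^ α i
      = (∏ i, ((α i)! : ℝ)) / (n + ∑ i, α i)! := by
  have h := setIntegral_cornerSimplex_prod_pow_mul_pow (Fin.tail α) (α 0) zero_le_one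
  simp only [one_pow, one_mul, Fin.tail] at h
  simp only [withSlack, Fin.prod_univ_succ, Fin.sum_univ_succ, Fin.cons_zero, Fin.cons_succ]
  rw [show n + (α 0 + ∑ i : Fin n, α i.succ) = n + ∑ i : Fin n, α i.succ + α 0 by ring]
  rw [mul_comm ((α 0)! : ℝ), ← h]
  congr 1; ext y; ring

theorem measureReal_cornerSimplex_one (n : ℕ) : volume.real (cornerSimplex n 1) = (n ! : ℝ)⁻¹ := by
  simpa using setIntegral_cornerSimplex_prod_withSlack_pow (n := n) 0

theorem setIntegral_cornerSimplex_withSlack {n : ℕ} (j : Fin (n + 1)) :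
    ∫ y in cornerSimplex n 1, withSlack y j = ((n + 1)! : ℝ)⁻¹ := by
  simpa [Pi.single_apply, pow_ite, apply_ite] using
    setIntegral_cornerSimplex_prod_withSlack_pow (Pi.single j 1)

theorem setIntegral_cornerSimplex_withSlack_mul {n : ℕ} {j k : Fin (n + 1)} (hjk : j ≠ k) :
    ∫ y in cornerSimplex n 1, withSlack y j * withSlack y k = ((n + 2)! : ℝ)⁻¹ := by
  set α : Fin (n + 1) → ℕ := Pi.single j 1 + Pi.single k 1
  have hpow (y : Fin n → ℝ) : ∏ i, withSlack y i ^ α i = withSlack y j * withSlack y k := by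
    simp only [α, Pi.add_apply, pow_add, Finset.prod_mul_distrib]
    simp [Pi.single_apply, pow_ite]
  have hfac (i : Fin (n + 1)) : ((α i)! : ℝ) = 1 := by
    by_cases i = j <;> by_cases i = k <;> simp_all [α]
  have hsum : ∑ i, α i = 2 := by simp [α, Finset.sum_add_distrib]
  simpa [hpow, hfac, hsum] using setIntegral_cornerSimplex_prod_withSlack_pow α

theorem withSlack_mem_stdSimplex_iff {n : ℕ} {y : Fin n → ℝ} :
    withSlack y ∈ stdSimplex ℝ (Fin (n + 1)) ↔ y ∈ cornerSimplex n 1 := by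
  simp [withSlack, stdSimplex, cornerSimplex, Fin.forall_fin_succ, Fin.sum_univ_succ, and_comm]

theorem withSlack_tail {n : ℕ} {s : Fin (n + 1) → ℝ} (hs : ∑ i, s i = 1) :
    withSlack (Fin.tail s) = s := by
  rw [Fin.sum_univ_succ] at hs
  ext i
  cases i using Fin.cases <;> simp [withSlack, Fin.tail, ← hs]

theorem uniformOn_image_eq_map {E F : Type*} [EMetricSpace E] [MeasurableSpace E] [BorelSpace E]
    [EMetricSpace F] [MeasurableSpace F] [BorelSpace F] {d : ℝ} {f : E → F} (hf : Measurable f)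
    {c : ℝ≥0∞} (hc₀ : c ≠ 0) (hc : c ≠ ∞) (hfd : ∀ s, μH[d] (f '' s) = c * μH[d] s) (s : Set E) :
    uniformOn d (f '' s) = (uniformOn d s).map f := by
  ext T hT
  simp only [uniformOn, Measure.map_apply hf hT, Measure.smul_apply, smul_eq_mul,
    Measure.restrict_apply hT, Measure.restrict_apply (hf hT), ← image_preimage_inter, hfd]
  rw [ENNReal.mul_inv (.inl hc₀) (.inl hc), mul_mul_mul_comm, ENNReal.inv_mul_cancel hc₀ hc,
    one_mul]

theorem uniformOn_finrank_eq_smul_restrict {U : Type*} [NormedAddCommGroup U] [NormedSpace ℝ U]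
    [FiniteDimensional ℝ U] [MeasurableSpace U] [BorelSpace U] (μ : Measure U)
    [μ.IsAddHaarMeasure] (s : Set U) :
    uniformOn (finrank ℝ U) s = (μ s)⁻¹ • μ.restrict s := by
  have hc := Measure.addHaarScalarFactor_pos_of_isAddHaarMeasure (μH[finrank ℝ U] : Measure U) μ
  rw [uniformOn, Measure.isAddLeftInvariant_eq_smul μH[finrank ℝ U] μ]
  set c := (μH[finrank ℝ U] : Measure U).addHaarScalarFactor μ
  have hc₀ : (c : ℝ≥0∞) ≠ 0 := ENNReal.coe_ne_zero.2 hc.ne'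
  ext T hT
  simp only [Measure.smul_apply, Measure.restrict_apply hT, smul_eq_mul, ENNReal.smul_def]
  rw [ENNReal.mul_inv (.inl hc₀) (.inl ENNReal.coe_ne_top), mul_mul_mul_comm,
    ENNReal.inv_mul_cancel hc₀ ENNReal.coe_ne_top, one_mul]

theorem uniformOn_affine_image_eq_map {U V : Type*} [NormedAddCommGroup U] [InnerProductSpace ℝ U]
    [FiniteDimensional ℝ U] [MeasurableSpace U] [BorelSpace U] [NormedAddCommGroup V]
    [InnerProductSpace ℝ V] [MeasurableSpace V] [BorelSpace V] {L : U →ₗ[ℝ] V}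
    (hL : Function.Injective L) (v : V) (s : Set U) :
    uniformOn (finrank ℝ U) ((fun u => v + L u) '' s)
      = ((volume s)⁻¹ • volume.restrict s).map (fun u => v + L u) := by
  have hdet : L.normDet ≠ 0 := fun h => LinearMap.normDet_eq_zero_iff_ker_ne_bot.1 h
    (LinearMap.ker_eq_bot.2 hL)
  rw [uniformOn_image_eq_map (by fun_prop)
    (ENNReal.ofReal_pos.2 (L.normDet_nonneg.lt_of_ne' hdet)).ne' ENNReal.ofReal_ne_top,
    uniformOn_finrank_eq_smul_restrict volume]
  intro t
  rw [← image_image (v + ·) L]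
  exact ((IsometryEquiv.addLeft v).isometry.hausdorffMeasure_image (.inl (by positivity)) _).trans
    (L.hausdorffMeasure_image t)

def weightedSimplex {ι : Type*} [Fintype ι] (w : ι → ℝ) : Set (EuclideanSpace ℝ ι) :=
  {t | (∀ p, 0 ≤ t p) ∧ ∑ p, w p * t p = 1}

noncomputable section WeightedSimplex

variable {ι : Type*} {n : ℕ} (w : ι → ℝ) (σ : Fin (n + 1) ≃ ι)

def simplexChart (y : Fin n → ℝ) : EuclideanSpace ℝ ι :=
  WithLp.toLp 2 fun p => withSlack y (σ.symm p) / w p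

def simplexChartLinear : EuclideanSpace ℝ (Fin n) →ₗ[ℝ] EuclideanSpace ℝ ι where
  toFun u := WithLp.toLp 2 fun p => (Fin.cons (-∑ i, u i) u.ofLp : Fin (n + 1) → ℝ) (σ.symm p) / w p
  map_add' u v := by
    ext p
    simp only [PiLp.add_apply, WithLp.ofLp_add]
    generalize σ.symm p = j
    cases j using Fin.cases <;> simp [Finset.sum_add_distrib] <;> ring
  map_smul' c u := by
    ext p
    simp only [PiLp.smul_apply, WithLp.ofLp_smul, RingHom.id_apply]
    generalize σ.symm p = j
    cases j using Fin.cases <;> simp [← Finset.mul_sum] <;> ring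

theorem simplexChart_eq_add (y : Fin n → ℝ) :
    simplexChart w σ y = simplexChart w σ 0 + simplexChartLinear w σ (WithLp.toLp 2 y) := by
  ext p
  simp only [simplexChart, simplexChartLinear, withSlack, LinearMap.coe_mk, AddHom.coe_mk,
    PiLp.add_apply]
  generalize σ.symm p = j
  cases j using Fin.cases with
  | zero => simp; ring
  | succ i => simp

theorem simplexChart_eq_comp : simplexChart w σ =
    (fun u => simplexChart w σ 0 + simplexChartLinear w σ u) ∘ WithLp.toLp 2 :=
  funext (simplexChart_eq_add w σ)

theorem injective_simplexChartLinear (hw : ∀ p, w p ≠ 0) :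
    Function.Injective (simplexChartLinear w σ) := by
  intro u v h
  ext i
  have := congrArg (fun t : EuclideanSpace ℝ ι => w (σ i.succ) * t (σ i.succ)) h
  simpa [simplexChartLinear, hw] using this

theorem weight_mul_simplexChart_apply (hw : ∀ p, w p ≠ 0) (y : Fin n → ℝ) (j : Fin (n + 1)) :
    w (σ j) * simplexChart w σ y (σ j) = withSlack y j := by
  simp [simplexChart, mul_div_cancel₀ _ (hw _)]

theorem mem_weightedSimplex_iff [Fintype ι] (hw : ∀ p, 0 < w p) {t : EuclideanSpace ℝ ι} :
    t ∈ weightedSimplex w ↔ (fun j => w (σ j) * t (σ j)) ∈ stdSimplex ℝ (Fin (n + 1)) := by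
  simp only [weightedSimplex, stdSimplex, mem_ofPred_eq, σ.forall_congr_left,
    Equiv.apply_symm_apply, fun p => mul_nonneg_iff_of_pos_left (hw p),
    Equiv.sum_comp σ (fun p => w p * t p)]

theorem simplexChart_image_cornerSimplex [Fintype ι] (hw : ∀ p, 0 < w p) :
    simplexChart w σ '' cornerSimplex n 1 = weightedSimplex w := by
  have hw₀ p := (hw p).ne'
  ext t
  rw [mem_weightedSimplex_iff w σ hw]
  constructor
  · rintro ⟨y, hy, rfl⟩
    simpa only [weight_mul_simplexChart_apply w σ hw₀] using withSlack_mem_stdSimplex_iff.2 hy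
  · intro ht
    refine ⟨Fin.tail fun j => w (σ j) * t (σ j), withSlack_mem_stdSimplex_iff.1 ?_, ?_⟩
    · rwa [withSlack_tail ht.2]
    · ext p
      simp [simplexChart, withSlack_tail ht.2, mul_div_cancel_left₀ _ (hw₀ p)]

theorem uniformOn_weightedSimplex [Fintype ι] (hw : ∀ p, 0 < w p) :
    uniformOn n (weightedSimplex w) = ((volume (cornerSimplex n 1))⁻¹ •
      volume.restrict (cornerSimplex n 1)).map (simplexChart w σ) := by
  have hC := (isClosed_cornerSimplex n 1).measurableSet
  have himage : WithLp.toLp 2 '' cornerSimplex n 1 = WithLp.ofLp ⁻¹' cornerSimplex n 1 :=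
    congrFun (image_eq_preimage_of_inverse (f := WithLp.toLp 2) (g := WithLp.ofLp)
      (fun _ => rfl) (fun _ => rfl)) _
  have hvol : volume (WithLp.ofLp ⁻¹' cornerSimplex n 1) = volume (cornerSimplex n 1) :=
    (PiLp.volume_preserving_ofLp _).measure_preimage hC.nullMeasurableSet
  have hrestrict : volume.restrict (WithLp.ofLp ⁻¹' cornerSimplex n 1)
      = (volume.restrict (cornerSimplex n 1)).map (WithLp.toLp 2) := by
    rw [← (PiLp.volume_preserving_toLp _).map_eq, Measure.restrict_map (by fun_prop)
      (hC.preimage (by fun_prop))]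
    rfl
  rw [← simplexChart_image_cornerSimplex w σ hw, simplexChart_eq_comp, image_comp, himage,
    show ((n : ℕ) : ℝ) = (finrank ℝ (EuclideanSpace ℝ (Fin n)) : ℕ) by simp,
    uniformOn_affine_image_eq_map (injective_simplexChartLinear w σ fun p => (hw p).ne'), hvol,
    hrestrict,
    ← Measure.map_map (by fun_prop) (by fun_prop)]
  simp only [Measure.map_smul]

theorem continuous_simplexChart [Fintype ι] : Continuous (simplexChart w σ) := by
  rw [simplexChart_eq_comp]
  exact continuous_const.add
    ((simplexChartLinear w σ).continuous_of_finiteDimensional.comp (PiLp.continuous_toLp 2 _))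

theorem integral_uniformOn_weightedSimplex [Fintype ι] (hw : ∀ p, 0 < w p)
    {g : EuclideanSpace ℝ ι → ℝ} (hg : Continuous g) :
    ∫ t, g t ∂uniformOn n (weightedSimplex w)
      = n ! * ∫ y in cornerSimplex n 1, g (simplexChart w σ y) := by
  rw [uniformOn_weightedSimplex w σ hw, integral_map (continuous_simplexChart w σ).aemeasurable
    hg.aestronglyMeasurable, integral_smul_measure, ENNReal.toReal_inv, ← measureReal_def,
    measureReal_cornerSimplex_one, inv_inv, smul_eq_mul]

end WeightedSimplex

section Moments

variable {ι : Type*} [Fintype ι] {n : ℕ} {w : ι → ℝ}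

theorem integrable_uniformOn_weightedSimplex (hw : ∀ p, 0 < w p) (hn : Fintype.card ι = n + 1)
    {g : EuclideanSpace ℝ ι → ℝ} (hg : Continuous g) :
    Integrable g (uniformOn n (weightedSimplex w)) := by
  let σ := (Fintype.equivFinOfCardEq hn).symm
  have hC : volume (cornerSimplex n 1) ≠ 0 := fun h => by
    simpa [Measure.real, h, eq_comm, Nat.factorial_ne_zero] using measureReal_cornerSimplex_one n
  rw [uniformOn_weightedSimplex w σ hw, integrable_map_measure hg.aestronglyMeasurable
    (continuous_simplexChart w σ).aemeasurable]
  exact ((hg.comp (continuous_simplexChart w σ)).continuousOn.integrableOn_compact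
    (isCompact_cornerSimplex n 1)).smul_measure (ENNReal.inv_ne_top.2 hC)

theorem integral_uniformOn_weightedSimplex_apply (hw : ∀ p, 0 < w p)
    (hn : Fintype.card ι = n + 1) (p : ι) :
    ∫ t, t p ∂uniformOn n (weightedSimplex w) = ((n + 1) * w p)⁻¹ := by
  let σ := (Fintype.equivFinOfCardEq hn).symm
  rw [integral_uniformOn_weightedSimplex w σ hw (by fun_prop)]
  simp only [simplexChart, PiLp.toLp_apply]
  rw [integral_div, setIntegral_cornerSimplex_withSlack, Nat.factorial_succ]
  push_cast
  field_simp

theorem integral_uniformOn_weightedSimplex_mul_apply (hw : ∀ p, 0 < w p)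
    (hn : Fintype.card ι = n + 1) {p q : ι} (hpq : p ≠ q) :
    ∫ t, t p * t q ∂uniformOn n (weightedSimplex w) = ((n + 1) * (n + 2) * w p * w q)⁻¹ := by
  let σ := (Fintype.equivFinOfCardEq hn).symm
  rw [integral_uniformOn_weightedSimplex w σ hw (by fun_prop)]
  simp only [simplexChart, PiLp.toLp_apply, div_mul_div_comm]
  rw [integral_div, setIntegral_cornerSimplex_withSlack_mul (σ.symm.injective.ne hpq),
    Nat.factorial_succ, Nat.factorial_succ]
  push_cast
  field_simp
  ring

theorem integral_uniformOn_weightedSimplex_sum {α : Type*} [Fintype α] (hw : ∀ p, 0 < w p)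
    (hn : Fintype.card ι = n + 1) (f : α → ι) :
    ∫ t, ∑ a, t (f a) ∂uniformOn n (weightedSimplex w) = ∑ a, ((n + 1) * w (f a))⁻¹ := by
  rw [integral_finsetSum _ fun a _ => integrable_uniformOn_weightedSimplex hw hn (by fun_prop)]
  exact Finset.sum_congr rfl fun a _ => integral_uniformOn_weightedSimplex_apply hw hn (f a)

theorem integral_uniformOn_weightedSimplex_sum_mul_sum {α β : Type*} [Fintype α] [Fintype β]
    (hw : ∀ p, 0 < w p) (hn : Fintype.card ι = n + 1) {f : α → ι} {g : β → ι}
    (hfg : ∀ a b, f a ≠ g b) :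
    ∫ t, (∑ a, t (f a)) * (∑ b, t (g b)) ∂uniformOn n (weightedSimplex w)
      = ∑ a, ∑ b, ((n + 1) * (n + 2) * w (f a) * w (g b))⁻¹ := by
  simp_rw [Finset.sum_mul_sum]
  rw [integral_finsetSum _ fun a _ => integrable_finsetSum _ fun b _ =>
    integrable_uniformOn_weightedSimplex hw hn (by fun_prop)]
  refine Finset.sum_congr rfl fun a _ => ?_
  rw [integral_finsetSum _ fun b _ => integrable_uniformOn_weightedSimplex hw hn (by fun_prop)]
  exact Finset.sum_congr rfl fun b _ => integral_uniformOn_weightedSimplex_mul_apply hw hn (hfg a b)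

end Moments

/-- Let `X = (X_{j,l})` be uniformly distributed on the weighted simplex
`Δ_k̄` and `Y j = ∑ l, X (j,l)`. For `j ≠ l` one has
`E[Y j · Y l] = r/((j)(l) k (kr+1))` and in particular `E[Y j · Y l] ≤ E[Y j] · E[Y l]`,
i.e. `Y j` and `Y l` are negatively correlated.
(Here indices `j, l : Fin k` carry the weights `j + 1`, `l + 1`.) -/
theorem stmt7 (k r : ℕ) (hk : 1 ≤ k) (hr : 1 ≤ r)
    (μ : Measure (EuclideanSpace ℝ (Fin k × Fin r)))
    (hμ : μ = uniformOn ((k * r : ℕ) - 1 : ℝ)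
        {t : EuclideanSpace ℝ (Fin k × Fin r) |
          (∀ p, 0 ≤ t p) ∧ ∑ p : Fin k × Fin r, ((p.1 : ℕ) + 1 : ℝ) * t p = 1})
    (j l : Fin k) (hjl : j ≠ l) :
    (∫ x, (∑ i, x (j, i)) * (∑ i, x (l, i)) ∂μ)
      = (r : ℝ) / (((j : ℕ) + 1 : ℝ) * ((l : ℕ) + 1 : ℝ) * k * ((k : ℝ) * r + 1)) ∧
    (∫ x, (∑ i, x (j, i)) * (∑ i, x (l, i)) ∂μ)
      ≤ (∫ x, (∑ i, x (j, i)) ∂μ) * (∫ x, (∑ i, x (l, i)) ∂μ) := by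
  have hkr : 1 ≤ k * r := Nat.mul_pos hk hr
  have hn : Fintype.card (Fin k × Fin r) = k * r - 1 + 1 := by simp; omega
  have hN : ((k * r - 1 : ℕ) : ℝ) + 1 = k * r := by rw [Nat.cast_sub hkr]; push_cast; ring
  have hw : ∀ p : Fin k × Fin r, 0 < ((p.1 : ℕ) + 1 : ℝ) := fun p => by positivity
  rw [← Nat.cast_pred hkr] at hμ
  change μ = uniformOn _ (weightedSimplex fun p => ((p.1 : ℕ) + 1 : ℝ)) at hμ
  have hY (j' : Fin k) : ∫ x, ∑ i, x (j', i) ∂μ = (((j' : ℕ) + 1 : ℝ) * k)⁻¹ := by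
    rw [hμ, integral_uniformOn_weightedSimplex_sum hw hn]
    simp only [Finset.sum_const, Finset.card_univ, Fintype.card_fin, nsmul_eq_mul, hN]
    field_simp
  have hYY : ∫ x, (∑ i, x (j, i)) * (∑ i, x (l, i)) ∂μ
      = (r : ℝ) / (((j : ℕ) + 1 : ℝ) * ((l : ℕ) + 1 : ℝ) * k * ((k : ℝ) * r + 1)) := by
    rw [hμ, integral_uniformOn_weightedSimplex_sum_mul_sum hw hn
      fun _ _ h => hjl (congrArg Prod.fst h)]
    simp only [Finset.sum_const, Finset.card_univ, Fintype.card_fin, nsmul_eq_mul]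
    rw [hN, show ((k * r - 1 : ℕ) : ℝ) + 2 = k * r + 1 by linarith]
    field_simp
  refine ⟨hYY, ?_⟩
  rw [hYY, hY, hY]
  have hk' : (0 : ℝ) < k := by exact_mod_cast hk
  calc _ = (k * r) / (k * r + 1) * ((((j : ℕ) + 1 : ℝ) * k)⁻¹ * (((l : ℕ) + 1 : ℝ) * k)⁻¹) := by
        field_simp
    _ ≤ _ := mul_le_of_le_one_left (by positivity) ((div_le_one (by positivity)).2 (by linarith))
end

section
/- Let t ≥ 1 be an integer and let a = (a_1, …, a_t) and b = (b_1, …, b_t) be real t-tuples. Let α be the number of indices i with a_i < 0 and β the number of indices i with b_i < 0. Then for every natural number j: |1_{[j=α]} · ∏_{i=1}^t a_i − 1_{[j=β]} · ∏_{i=1}^t b_i| ≤ Σ_{p=1}^t (∏_{q=1}^{p−1} |a_q|) · |a_p − b_p| · (∏_{s=p+1}^t |b_s|), where 1_{[j=α]} equals 1 if j = α and 0 otherwise (and similarly for 1_{[j=β]}). -/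
open Finset

theorem tele {t : ℕ} (S : Finset (Fin t)) (x y : Fin t → ℝ) :
    ∏ i ∈ S, x i - ∏ i ∈ S, y i
      = ∑ p ∈ S, (∏ q ∈ S.filter (· < p), x q) * (x p - y p) * (∏ s ∈ S.filter (p < ·), y s) := by
  induction S using Finset.strongInduction with
  | _ S ih =>
    rcases S.eq_empty_or_nonempty with rfl | hS
    · simp
    · set m := S.min' hS with hm
      have hmS : m ∈ S := S.min'_mem hS
      set E := S.erase m with hE
      have hstep : S = insert m E := (Finset.insert_erase hmS).symm
      have hnm : m ∉ E := Finset.notMem_erase m S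
      have hmin : ∀ q ∈ E, m < q := fun q hq =>
        lt_of_le_of_ne (S.min'_le q (Finset.mem_of_mem_erase hq))
          (Ne.symm (Finset.ne_of_mem_erase hq))
      have ihm := ih E (Finset.erase_ssubset hmS)
      rw [hstep, Finset.prod_insert hnm, Finset.prod_insert hnm, Finset.sum_insert hnm]
      have h1 : (insert m E).filter (· < m) = ∅ := by
        apply Finset.filter_false_of_mem
        intro q hq
        rcases Finset.mem_insert.1 hq with rfl | hq
        · exact lt_irrefl _
        · exact not_lt_of_gt (hmin q hq)
      have h2 : (insert m E).filter (m < ·) = E := by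
        rw [Finset.filter_insert, if_neg (lt_irrefl m), Finset.filter_true_of_mem hmin]
      have h3 : ∀ p ∈ E, (insert m E).filter (· < p) = insert m (E.filter (· < p)) := by
        intro p hp
        rw [Finset.filter_insert, if_pos (hmin p hp)]
      have h4 : ∀ p ∈ E, (insert m E).filter (p < ·) = E.filter (p < ·) := by
        intro p hp
        rw [Finset.filter_insert, if_neg (not_lt_of_gt (hmin p hp))]
      have hcong : ∀ p ∈ E,
          (∏ q ∈ (insert m E).filter (· < p), x q) * (x p - y p) *
              (∏ s ∈ (insert m E).filter (p < ·), y s)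
            = x m * ((∏ q ∈ E.filter (· < p), x q) * (x p - y p) *
              (∏ s ∈ E.filter (p < ·), y s)) := by
        intro p hp
        rw [h3 p hp, h4 p hp,
          Finset.prod_insert (fun hmem => hnm (Finset.mem_of_mem_filter m hmem))]
        ring
      rw [h1, h2, Finset.sum_congr rfl hcong, ← Finset.mul_sum, ← ihm]
      simp only [Finset.prod_empty, one_mul]
      ring

/-- abs telescoping bound over a subset -/
theorem tele_abs {t : ℕ} (S : Finset (Fin t)) (a b : Fin t → ℝ) :
    abs (∏ i ∈ S, |a i| - ∏ i ∈ S, |b i|)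
      ≤ ∑ p ∈ S, (∏ q ∈ S.filter (· < p), |a q|) * |a p - b p| *
          (∏ s ∈ S.filter (p < ·), |b s|) := by
  rw [tele S (fun i => |a i|) (fun i => |b i|)]
  refine (Finset.abs_sum_le_sum_abs _ _).trans (Finset.sum_le_sum fun p hp => ?_)
  rw [abs_mul, abs_mul]
  have h1 : abs (∏ q ∈ S.filter (· < p), |a q|) = ∏ q ∈ S.filter (· < p), |a q| :=
    abs_of_nonneg (Finset.prod_nonneg fun q _ => abs_nonneg _)
  have h2 : abs (∏ s ∈ S.filter (p < ·), |b s|) = ∏ s ∈ S.filter (p < ·), |b s| :=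
    abs_of_nonneg (Finset.prod_nonneg fun s _ => abs_nonneg _)
  rw [h1, h2]
  have h3 : abs (|a p| - |b p|) ≤ |a p - b p| := abs_abs_sub_abs_le_abs_sub _ _
  have h4 : (0:ℝ) ≤ ∏ q ∈ S.filter (· < p), |a q| :=
    Finset.prod_nonneg fun q _ => abs_nonneg _
  have h5 : (0:ℝ) ≤ ∏ s ∈ S.filter (p < ·), |b s| :=
    Finset.prod_nonneg fun s _ => abs_nonneg _
  gcongr


theorem prod_split {t : ℕ} (f : Fin t → ℝ) (i : Fin t) :
    ∏ p, f p = (∏ q ∈ Iio i, f q) * f i * ∏ s ∈ Ioi i, f s := by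
  have hd : Disjoint (Iio i) (insert i (Ioi i)) := by
    simp only [Finset.disjoint_left, mem_Iio, mem_insert, mem_Ioi]
    rintro q hq (rfl | hq2)
    · exact lt_irrefl _ hq
    · exact lt_asymm hq hq2
  have hu : (univ : Finset (Fin t)) = Iio i ∪ insert i (Ioi i) := by
    ext q
    simp only [mem_univ, mem_union, mem_Iio, mem_insert, mem_Ioi, true_iff]
    rcases lt_trichotomy q i with h | h | h
    · exact Or.inl h
    · exact Or.inr (Or.inl h)
    · exact Or.inr (Or.inr h)
  rw [hu, Finset.prod_union hd, Finset.prod_insert (by simp)]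
  ring

theorem Iio_split {t : ℕ} (i p : Fin t) (h : i < p) :
    Iio p = Iio i ∪ insert i (Ioo i p) := by
  ext q
  simp only [mem_Iio, mem_union, mem_insert, mem_Ioo]
  constructor
  · intro hq
    rcases lt_trichotomy q i with h1 | h1 | h1
    · exact Or.inl h1
    · exact Or.inr (Or.inl h1)
    · exact Or.inr (Or.inr ⟨h1, hq⟩)
  · rintro (h1 | rfl | ⟨h1, h2⟩)
    · exact h1.trans h
    · exact h
    · exact h2

theorem prod_Iio_split {t : ℕ} (f : Fin t → ℝ) (i p : Fin t) (h : i < p) :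
    ∏ q ∈ Iio p, f q = (∏ q ∈ Iio i, f q) * f i * ∏ q ∈ Ioo i p, f q := by
  have hd : Disjoint (Iio i) (insert i (Ioo i p)) := by
    simp only [Finset.disjoint_left, mem_Iio, mem_insert, mem_Ioo]
    rintro q hq (rfl | ⟨h1, _⟩)
    · exact lt_irrefl _ hq
    · exact lt_asymm hq h1
  rw [Iio_split i p h, Finset.prod_union hd, Finset.prod_insert (by simp)]
  ring

theorem Ioi_split {t : ℕ} (i p : Fin t) (h : p < i) :
    Ioi p = Ioo p i ∪ insert i (Ioi i) := by
  ext q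
  simp only [mem_Ioi, mem_union, mem_insert, mem_Ioo]
  constructor
  · intro hq
    rcases lt_trichotomy q i with h1 | h1 | h1
    · exact Or.inl ⟨hq, h1⟩
    · exact Or.inr (Or.inl h1)
    · exact Or.inr (Or.inr h1)
  · rintro (⟨h1, _⟩ | rfl | h1)
    · exact h1
    · exact h
    · exact h.trans h1

theorem prod_Ioi_split {t : ℕ} (f : Fin t → ℝ) (i p : Fin t) (h : p < i) :
    ∏ q ∈ Ioi p, f q = (∏ q ∈ Ioo p i, f q) * f i * ∏ q ∈ Ioi i, f q := by
  have hd : Disjoint (Ioo p i) (insert i (Ioi i)) := by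
    simp only [Finset.disjoint_left, mem_Ioo, mem_insert, mem_Ioi]
    rintro q ⟨_, hq⟩ (rfl | h2)
    · exact lt_irrefl _ hq
    · exact lt_asymm hq h2
  rw [Ioi_split i p h, Finset.prod_union hd, Finset.prod_insert (by simp)]
  ring

set_option maxHeartbeats 1000000 in
theorem key_a {t : ℕ} (a b : Fin t → ℝ) (i : Fin t) (hi : |a i| ≤ |a i - b i|) :
    ∏ p, |a p| ≤ ∑ p : Fin t, (∏ q ∈ Iio p, |a q|) * |a p - b p| * ∏ s ∈ Ioi p, |b s| := by
  set A := ∏ q ∈ Iio i, |a q| with hA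
  set B := ∏ s ∈ Ioi i, |b s| with hB
  have hAnn : 0 ≤ A := Finset.prod_nonneg fun q _ => abs_nonneg _
  have hBnn : 0 ≤ B := Finset.prod_nonneg fun s _ => abs_nonneg _
  have hf1 : ∀ p ∈ Ioi i, (Ioi i).filter (· < p) = Ioo i p := by
    intro p hp; ext q
    simp only [mem_filter, mem_Ioi, mem_Ioo]
  have hf2 : ∀ p ∈ Ioi i, (Ioi i).filter (p < ·) = Ioi p := by
    intro p hp; ext q
    simp only [mem_filter, mem_Ioi]
    exact ⟨fun h => h.2, fun h => ⟨(mem_Ioi.1 hp).trans h, h⟩⟩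
  set tail := ∑ p ∈ Ioi i, (∏ q ∈ Ioo i p, |a q|) * |a p - b p| * ∏ s ∈ Ioi p, |b s| with htl
  have htailnn : 0 ≤ tail := Finset.sum_nonneg fun p _ => by positivity
  have htail : ∏ s ∈ Ioi i, |a s| ≤ B + tail := by
    have h := tele_abs (Ioi i) a b
    rw [Finset.sum_congr rfl (fun p hp => by rw [hf1 p hp, hf2 p hp])] at h
    have h2 := (abs_le.1 h).2
    rw [htl]; linarith
  have hsum : ∑ p ∈ Ioi i, (∏ q ∈ Iio p, |a q|) * |a p - b p| * ∏ s ∈ Ioi p, |b s|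
      = A * |a i| * tail := by
    rw [htl, Finset.mul_sum]
    refine Finset.sum_congr rfl fun p hp => ?_
    rw [prod_Iio_split (fun q => |a q|) i p (mem_Ioi.1 hp)]
    ring
  have hsub : A * |a i - b i| * B
        + ∑ p ∈ Ioi i, (∏ q ∈ Iio p, |a q|) * |a p - b p| * ∏ s ∈ Ioi p, |b s|
      ≤ ∑ p : Fin t, (∏ q ∈ Iio p, |a q|) * |a p - b p| * ∏ s ∈ Ioi p, |b s| := by
    rw [← Finset.sum_insert (f := fun p =>
      (∏ q ∈ Iio p, |a q|) * |a p - b p| * ∏ s ∈ Ioi p, |b s|) (show i ∉ Ioi i by simp)]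
    exact Finset.sum_le_sum_of_subset_of_nonneg (Finset.subset_univ _)
      (fun p _ _ => by positivity)
  calc ∏ p, |a p| = A * |a i| * ∏ s ∈ Ioi i, |a s| := prod_split _ i
    _ ≤ A * |a i| * (B + tail) := by
        have : 0 ≤ A * |a i| := by positivity
        exact mul_le_mul_of_nonneg_left htail this
    _ = A * |a i| * B + A * |a i| * tail := by ring
    _ ≤ A * |a i - b i| * B + A * |a i| * tail := by
        have : A * |a i| * B ≤ A * |a i - b i| * B := by
          apply mul_le_mul_of_nonneg_right _ hBnn
          exact mul_le_mul_of_nonneg_left hi hAnn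
        linarith
    _ ≤ _ := by rw [← hsum]; exact hsub

set_option maxHeartbeats 1000000 in
theorem key_b {t : ℕ} (a b : Fin t → ℝ) (i : Fin t) (hi : |b i| ≤ |a i - b i|) :
    ∏ p, |b p| ≤ ∑ p : Fin t, (∏ q ∈ Iio p, |a q|) * |a p - b p| * ∏ s ∈ Ioi p, |b s| := by
  set A := ∏ q ∈ Iio i, |a q| with hA
  set B := ∏ s ∈ Ioi i, |b s| with hB
  have hAnn : 0 ≤ A := Finset.prod_nonneg fun q _ => abs_nonneg _
  have hBnn : 0 ≤ B := Finset.prod_nonneg fun s _ => abs_nonneg _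
  have hf1 : ∀ p ∈ Iio i, (Iio i).filter (· < p) = Iio p := by
    intro p hp; ext q
    simp only [mem_filter, mem_Iio]
    exact ⟨fun h => h.2, fun h => ⟨h.trans (mem_Iio.1 hp), h⟩⟩
  have hf2 : ∀ p ∈ Iio i, (Iio i).filter (p < ·) = Ioo p i := by
    intro p hp; ext q
    simp only [mem_filter, mem_Iio, mem_Ioo, and_comm]
  set head := ∑ p ∈ Iio i, (∏ q ∈ Iio p, |a q|) * |a p - b p| * ∏ s ∈ Ioo p i, |b s| with hh
  have hheadnn : 0 ≤ head := Finset.sum_nonneg fun p _ => by positivity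
  have hhead : ∏ q ∈ Iio i, |b q| ≤ A + head := by
    have h := tele_abs (Iio i) a b
    rw [Finset.sum_congr rfl (fun p hp => by rw [hf1 p hp, hf2 p hp])] at h
    have h2 := (abs_le.1 h).1
    rw [hh]; linarith
  have hsum : ∑ p ∈ Iio i, (∏ q ∈ Iio p, |a q|) * |a p - b p| * ∏ s ∈ Ioi p, |b s|
      = head * (|b i| * B) := by
    rw [hh, Finset.sum_mul]
    refine Finset.sum_congr rfl fun p hp => ?_
    rw [prod_Ioi_split (fun s => |b s|) i p (mem_Iio.1 hp)]
    ring
  have hsub : A * |a i - b i| * B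
        + ∑ p ∈ Iio i, (∏ q ∈ Iio p, |a q|) * |a p - b p| * ∏ s ∈ Ioi p, |b s|
      ≤ ∑ p : Fin t, (∏ q ∈ Iio p, |a q|) * |a p - b p| * ∏ s ∈ Ioi p, |b s| := by
    rw [← Finset.sum_insert (f := fun p =>
      (∏ q ∈ Iio p, |a q|) * |a p - b p| * ∏ s ∈ Ioi p, |b s|) (show i ∉ Iio i by simp)]
    exact Finset.sum_le_sum_of_subset_of_nonneg (Finset.subset_univ _)
      (fun p _ _ => by positivity)
  calc ∏ p, |b p| = (∏ q ∈ Iio i, |b q|) * |b i| * B := prod_split _ i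
    _ ≤ (A + head) * |b i| * B := by
        have h1 : 0 ≤ |b i| * B := by positivity
        calc (∏ q ∈ Iio i, |b q|) * |b i| * B = (∏ q ∈ Iio i, |b q|) * (|b i| * B) := by ring
          _ ≤ (A + head) * (|b i| * B) := mul_le_mul_of_nonneg_right hhead h1
          _ = (A + head) * |b i| * B := by ring
    _ = A * |b i| * B + head * (|b i| * B) := by ring
    _ ≤ A * |a i - b i| * B + head * (|b i| * B) := by
        have : A * |b i| * B ≤ A * |a i - b i| * B := by
          apply mul_le_mul_of_nonneg_right _ hBnn
          exact mul_le_mul_of_nonneg_left hi hAnn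
        linarith
    _ ≤ _ := by rw [← hsum]; exact hsub

theorem opp_sign {u v : ℝ} (h : ¬(u < 0 ↔ v < 0)) : |u| ≤ |u - v| ∧ |v| ≤ |u - v| := by
  rcases lt_or_ge u 0 with hu | hu <;> rcases lt_or_ge v 0 with hv | hv
  · exact absurd (iff_of_true hu hv) h
  · rw [abs_of_neg hu, abs_of_nonneg hv, abs_of_nonpos (by linarith)]
    constructor <;> linarith
  · rw [abs_of_nonneg hu, abs_of_neg hv, abs_of_nonneg (by linarith)]
    constructor <;> linarith
  · exact absurd (iff_of_false (not_lt.2 hu) (not_lt.2 hv)) h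


/-- Let `a, b : Fin t → ℝ`, let `α` (resp. `β`) be the number of indices `i`
with `a i < 0` (resp. `b i < 0`). Then for every `j : ℕ`,
`|1_{j=α} ∏ i, a i − 1_{j=β} ∏ i, b i| ≤ ∑ p, (∏_{q<p} |a q|) · |a p − b p| · (∏_{s>p} |b s|)`. -/
theorem stmt10 (t : ℕ) (ht : 1 ≤ t) (a b : Fin t → ℝ) (j : ℕ) :
    |(if j = (Finset.univ.filter fun i => a i < 0).card then ∏ i, a i else 0)
        - (if j = (Finset.univ.filter fun i => b i < 0).card then ∏ i, b i else 0)|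
      ≤ ∑ p : Fin t,
          (∏ q ∈ Finset.univ.filter fun q => q < p, |a q|) * |a p - b p| *
            (∏ s ∈ Finset.univ.filter fun s => p < s, |b s|) := by
  have hfl : ∀ p : Fin t, (Finset.univ.filter fun q => q < p) = Iio p := fun p => by
    ext q; simp
  have hfg : ∀ p : Fin t, (Finset.univ.filter fun s => p < s) = Ioi p := fun p => by
    ext q; simp
  have hR : ∑ p : Fin t,
          (∏ q ∈ Finset.univ.filter fun q => q < p, |a q|) * |a p - b p| *
            (∏ s ∈ Finset.univ.filter fun s => p < s, |b s|)
      = ∑ p : Fin t, (∏ q ∈ Iio p, |a q|) * |a p - b p| * ∏ s ∈ Ioi p, |b s| :=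
    Finset.sum_congr rfl fun p _ => by rw [hfl p, hfg p]
  rw [hR]
  have hmismatch : (Finset.univ.filter fun i => a i < 0) ≠ (Finset.univ.filter fun i => b i < 0) →
      ∃ i : Fin t, ¬(a i < 0 ↔ b i < 0) := by
    intro hne
    by_contra hc
    push_neg at hc
    exact hne (by ext q; simp only [Finset.mem_filter, Finset.mem_univ, true_and]; exact hc q)
  split_ifs with h1 h2 h2
  · -- both indicators on
    rw [tele Finset.univ a b]
    refine (Finset.abs_sum_le_sum_abs _ _).trans (Finset.sum_le_sum fun p _ => ?_)
    rw [hfl p, hfg p, abs_mul, abs_mul, Finset.abs_prod, Finset.abs_prod]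
  · -- j = α, j ≠ β
    obtain ⟨i, hi⟩ := hmismatch (fun he => h2 (h1.trans (by rw [he])))
    rw [sub_zero, Finset.abs_prod]
    exact key_a a b i (opp_sign hi).1
  · -- j ≠ α, j = β
    obtain ⟨i, hi⟩ := hmismatch (fun he => h1 (h2.trans (by rw [he])))
    rw [zero_sub, abs_neg, Finset.abs_prod]
    exact key_b a b i (opp_sign hi).2
  · rw [sub_zero, abs_zero]
    exact Finset.sum_nonneg fun p _ => by positivity
end

section
/- Let r ≥ 2 and let a_1, …, a_r ≥ 1 be integers with d = gcd(a_1,…,a_r). Let H = {z ∈ ℤ^r : Σ_i a_i z_i = 0}, let (v_1, …, v_{r−1}) be a ℤ-basis of H, and for m ∈ ℕ let H_m = {l ∈ ℕ^r : Σ_i a_i l_i = m}. Fix an integer m_0 ≥ 1 and u ∈ H_{m_0}, and set C_u = (u + Σ_{j=1}^{r−1} [0,1)·v_j) ∩ (m_0·Δ_a) and K_u = {λ·x : λ ∈ ℝ_{≥0}, x ∈ C_u}. Then: (i) there is a constant K > 0 (depending on a, the v_j, m_0 and u) such that for all m ≥ 1 the set K_u ∩ H_m is finite of cardinality at most K·(m/m_0)^{r−1};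 (ii) if moreover C_u is contained in the relative interior of m_0·Δ_a in the affine hyperplane {t ∈ ℝ^r : Σ_i a_i t_i = m_0}, then card(K_u ∩ H_m) · (m_0/m)^{r−1} → 1 as m → ∞ along multiples of d. -/
/-!
Put `λ = m / m₀`. A point of `K_u ∩ H_m` is `l = λ x` with `x = u + ∑ tⱼ vⱼ`, `t ∈ [0,1)^{r-1}`.
If `d ∣ m`, Bézout gives an integer `p` with `∑ aᵢ pᵢ = m`, and `λ u - p ∈ H ⊗ ℝ` has real
coordinates `β` in the basis `v`. Since `l - p ∈ H`, `l = p + ∑ cⱼ vⱼ` with integers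
`cⱼ = βⱼ + λ tⱼ`, so `l ↦ c` embeds `K_u ∩ H_m` into the lattice points of the box
`∏ⱼ [βⱼ, βⱼ + λ)`, of which there are between `(λ - 1)^{r-1}` and `(λ + 1)^{r-1}`.
Conversely every lattice point of the box comes from a point of `K_u ∩ H_m` as soon as the
whole parallelepiped `u + ∑ [0,1) vⱼ` is nonnegative. Under the interior hypothesis this holds
by connectedness of the cube: where the point of the parallelepiped is nonnegative it lies in
`C_u`, hence in the relative interior of `m₀ Δ_a`, hence it is strictly positive.
-/

open Filter Topology

theorem Finset.natCast_gcd {ι : Type*} (s : Finset ι) (a : ι → ℕ) :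
    ((s.gcd a : ℕ) : ℤ) = s.gcd fun i => (a i : ℤ) := by
  refine Int.dvd_antisymm (Int.natCast_nonneg _)
    (Int.nonneg_of_normalize_eq_self Finset.normalize_gcd)
    (Finset.dvd_gcd fun i hi => Int.natCast_dvd_natCast.mpr (Finset.gcd_dvd hi)) ?_
  rw [Int.dvd_natCast]
  exact Finset.dvd_gcd fun i hi => by
    simpa using Int.natAbs_dvd_natAbs.mpr (Finset.gcd_dvd (f := fun i => (a i : ℤ)) hi)

theorem Finset.exists_sum_mul_eq_gcd {ι : Type*} [Fintype ι] (a : ι → ℕ) :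
    ∃ w : ι → ℤ, ∑ i, (a i : ℤ) * w i = (Finset.univ.gcd a : ℕ) := by
  obtain ⟨w, hw⟩ := Finset.univ.gcd_eq_sum_mul fun i => (a i : ℤ)
  exact ⟨w, by rw [Finset.natCast_gcd, hw]⟩

theorem LinearIndependent.intCast {ι κ S : Type*} [Finite ι] [CommRing S] [IsDomain S]
    [CharZero S] {v : κ → ι → ℤ} (hv : LinearIndependent ℤ v) :
    LinearIndependent S fun j i => (v j i : S) := by
  simpa only [algebraMap_int_eq, Int.coe_castRingHom, Function.comp_def] using
    linearIndependent_algebraMap_comp_iff (S := S) |>.mpr hv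

theorem IsPreconnected.forall_pos_of_nonneg_imp_pos {X ι : Type*} [TopologicalSpace X] [Finite ι]
    {s : Set X} (hs : IsPreconnected s) {f : X → ι → ℝ} (hf : Continuous f)
    (hpos : ∀ x ∈ s, (∀ i, 0 ≤ f x i) → ∀ i, 0 < f x i) {x₀ : X} (hx₀ : x₀ ∈ s)
    (h₀ : ∀ i, 0 ≤ f x₀ i) : ∀ x ∈ s, ∀ i, 0 < f x i := by
  have hU : IsOpen {x | ∀ i, 0 < f x i} := by
    simp only [Set.ofPred_forall]
    exact isOpen_iInter_of_finite fun i =>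
      isOpen_lt continuous_const ((continuous_apply i).comp hf)
  have hclosure : closure {x | ∀ i, 0 < f x i} ⊆ {x | ∀ i, 0 ≤ f x i} := by
    refine closure_minimal (fun x hx i => (hx i).le) ?_
    simp only [Set.ofPred_forall]
    exact isClosed_iInter fun i => isClosed_le continuous_const ((continuous_apply i).comp hf)
  exact hs.subset_of_closure_inter_subset hU ⟨x₀, hx₀, hpos x₀ hx₀ h₀⟩
    fun x ⟨hx, hxs⟩ => hpos x hxs (hclosure hx)

theorem exists_add_smul_mem_of_mem_intrinsicInterior {V : Type*} [NormedAddCommGroup V]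
    [NormedSpace ℝ V] {s : Set V} {y χ : V} (hy : y ∈ intrinsicInterior ℝ s)
    (hχ : χ ∈ (affineSpan ℝ s).direction) : ∃ ε > (0 : ℝ), y + ε • χ ∈ s := by
  obtain ⟨p, hp, rfl⟩ := hy
  let γ : ℝ → affineSpan ℝ s := fun ε =>
    ⟨ε • χ +ᵥ (p : V), AffineSubspace.vadd_mem_of_mem_direction (Submodule.smul_mem _ _ hχ) p.2⟩
  have hγ : Continuous γ := by fun_prop
  have hγ0 : γ 0 = p := by ext; simp [γ]
  have hev : ∀ᶠ ε in 𝓝 (0 : ℝ), γ ε ∈ interior ((↑) ⁻¹' s) :=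
    hγ.continuousAt.preimage_mem_nhds (by rw [hγ0]; exact isOpen_interior.mem_nhds hp)
  have hev' : ∀ᶠ ε in 𝓝[>] (0 : ℝ), γ ε ∈ interior ((↑) ⁻¹' s) ∧ 0 < ε :=
    (hev.filter_mono nhdsWithin_le_nhds).and self_mem_nhdsWithin
  obtain ⟨ε, hε, hεpos⟩ := hev'.exists
  refine ⟨ε, hεpos, ?_⟩
  simpa [γ, add_comm] using interior_subset hε

theorem pos_of_mem_intrinsicInterior_weightedSimplex {ι : Type*} [Fintype ι] [Nontrivial ι]
    {a : ι → ℝ} (ha : ∀ i, 0 < a i) {c : ℝ} (hc : 0 < c) {y : ι → ℝ}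
    (hy : y ∈ intrinsicInterior ℝ {x : ι → ℝ | (∀ i, 0 ≤ x i) ∧ ∑ i, a i * x i = c})
    (i : ι) : 0 < y i := by
  classical
  set Δ := {x : ι → ℝ | (∀ i, 0 ≤ x i) ∧ ∑ i, a i * x i = c}
  have hvertex : ∀ j, Pi.single j (c / a j) ∈ Δ := fun j => by
    refine ⟨fun i' => ?_, ?_⟩
    · rcases eq_or_ne i' j with rfl | h
      · simpa using (div_pos hc (ha i')).le
      · simp [h]
    · simp [Pi.single_apply, mul_div_cancel₀ _ (ha j).ne']
  obtain ⟨k, hk⟩ := exists_ne i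
  obtain ⟨ε, hε, hmem⟩ := exists_add_smul_mem_of_mem_intrinsicInterior hy
    (AffineSubspace.vsub_mem_direction (subset_affineSpan ℝ Δ (hvertex k))
      (subset_affineSpan ℝ Δ (hvertex i)))
  have hi := hmem.1 i
  simp only [vsub_eq_sub, Pi.add_apply, Pi.smul_apply, Pi.sub_apply, Pi.single_eq_same,
    Pi.single_eq_of_ne hk.symm, smul_eq_mul] at hi
  nlinarith [mul_pos hε (div_pos hc (ha i))]

noncomputable def latticeBox {κ : Type*} [Fintype κ] [DecidableEq κ] (β : κ → ℝ) (L : ℝ) :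
    Finset (κ → ℤ) :=
  Fintype.piFinset fun j => Finset.Ico ⌈β j⌉ ⌈β j + L⌉

section LatticeBox

variable {κ : Type*} [Fintype κ] [DecidableEq κ]

theorem mem_latticeBox {β : κ → ℝ} {L : ℝ} {c : κ → ℤ} :
    c ∈ latticeBox β L ↔ ∀ j, β j ≤ c j ∧ (c j : ℝ) < β j + L := by
  simp only [latticeBox, Fintype.mem_piFinset, Finset.mem_Ico, Int.ceil_le, Int.lt_ceil]

theorem card_Ico_ceil_ceil_add (β : ℝ) {L : ℝ} (hL : 0 ≤ L) :
    ((Finset.Ico ⌈β⌉ ⌈β + L⌉).card : ℝ) = ⌈β + L⌉ - ⌈β⌉ := by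
  rw [Int.card_Ico, ← Int.cast_natCast, Int.toNat_of_nonneg (sub_nonneg.mpr
    (Int.ceil_le_ceil (le_add_of_nonneg_right hL))), Int.cast_sub]

theorem card_latticeBox (β : κ → ℝ) {L : ℝ} (hL : 0 ≤ L) :
    ((latticeBox β L).card : ℝ) = ∏ j, ((⌈β j + L⌉ : ℝ) - ⌈β j⌉) := by
  rw [latticeBox, Fintype.card_piFinset, Nat.cast_prod]
  exact Finset.prod_congr rfl fun j _ => card_Ico_ceil_ceil_add (β j) hL

theorem card_latticeBox_le (β : κ → ℝ) {L : ℝ} (hL : 0 ≤ L) :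
    ((latticeBox β L).card : ℝ) ≤ (L + 1) ^ Fintype.card κ := by
  rw [card_latticeBox β hL, ← Finset.card_univ, ← Finset.prod_const]
  refine Finset.prod_le_prod (fun j _ => ?_) fun j _ => ?_
  · exact sub_nonneg.mpr (Int.cast_le.mpr (Int.ceil_le_ceil (le_add_of_nonneg_right hL)))
  · linarith [Int.ceil_lt_add_one (β j + L), Int.le_ceil (β j)]

theorem pow_sub_one_le_card_latticeBox (β : κ → ℝ) {L : ℝ} (hL : 1 ≤ L) :
    (L - 1) ^ Fintype.card κ ≤ (latticeBox β L).card := by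
  rw [card_latticeBox β (by linarith), ← Finset.card_univ, ← Finset.prod_const]
  refine Finset.prod_le_prod (fun j _ => by linarith) fun j _ => ?_
  linarith [Int.le_ceil (β j + L), Int.ceil_lt_add_one (β j)]

end LatticeBox

theorem tendsto_mul_inv_pow_of_pow_sub_one_le_of_le_pow_add_one {α : Type*} {l : Filter α}
    {f x : α → ℝ} (k : ℕ) (hx : Tendsto x l atTop) (hlo : ∀ᶠ a in l, (x a - 1) ^ k ≤ f a)
    (hhi : ∀ᶠ a in l, f a ≤ (x a + 1) ^ k) : Tendsto (fun a => f a * (x a)⁻¹ ^ k) l (𝓝 1) := by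
  have hinv : Tendsto (fun a => (x a)⁻¹) l (𝓝 0) := tendsto_inv_atTop_zero.comp hx
  have hlo_lim : Tendsto (fun a => (1 - (x a)⁻¹) ^ k) l (𝓝 1) := by
    simpa using (hinv.const_sub 1).pow k
  have hhi_lim : Tendsto (fun a => (1 + (x a)⁻¹) ^ k) l (𝓝 1) := by
    simpa using (hinv.const_add 1).pow k
  refine tendsto_of_tendsto_of_tendsto_of_le_of_le' hlo_lim hhi_lim ?_ ?_
  · filter_upwards [hlo, hx.eventually_gt_atTop 0] with a ha hxa
    calc (1 - (x a)⁻¹) ^ k = (x a - 1) ^ k * (x a)⁻¹ ^ k := by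
          rw [← mul_pow]; field_simp
      _ ≤ f a * (x a)⁻¹ ^ k := by gcongr
  · filter_upwards [hhi, hx.eventually_gt_atTop 0] with a ha hxa
    calc f a * (x a)⁻¹ ^ k ≤ (x a + 1) ^ k * (x a)⁻¹ ^ k := by gcongr
      _ = (1 + (x a)⁻¹) ^ k := by rw [← mul_pow]; field_simp

def latticeMap {ι κ : Type*} [Fintype κ] (p : ι → ℤ) (v : κ → ι → ℤ) (c : κ → ℤ) : ι → ℤ :=
  p + ∑ j, c j • v j

theorem latticeMap_apply {ι κ : Type*} [Fintype κ] (p : ι → ℤ) (v : κ → ι → ℤ) (c : κ → ℤ)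
    (i : ι) : latticeMap p v c i = p i + ∑ j, c j * v j i := by
  simp [latticeMap, Finset.sum_apply]

theorem latticeMap_injective {ι κ : Type*} [Fintype κ] (p : ι → ℤ) {v : κ → ι → ℤ}
    (hv : LinearIndependent ℤ v) : Function.Injective (latticeMap p v) :=
  fun c c' h => funext (Fintype.linearIndependent_iffₛ.mp hv c c' (add_left_cancel h))

section ConePoints

variable {ι κ : Type*} [Fintype ι] [Fintype κ]

-- `fundamentalCell`, `cellCone` and `conePoints m` are `C_u`, `K_u` and `K_u ∩ H_m`.
def fundamentalCell (a : ι → ℕ) (v : κ → ι → ℤ) (u : ι → ℕ) (m₀ : ℕ) : Set (ι → ℝ) :=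
  {x | (∃ t : κ → ℝ, (∀ j, 0 ≤ t j ∧ t j < 1) ∧
      x = (fun i => (u i : ℝ)) + ∑ j, t j • (fun i => (v j i : ℝ))) ∧
    (∀ i, 0 ≤ x i) ∧ ∑ i, (a i : ℝ) * x i = m₀}

def cellCone (a : ι → ℕ) (v : κ → ι → ℤ) (u : ι → ℕ) (m₀ : ℕ) : Set (ι → ℝ) :=
  {y | ∃ lam : ℝ, 0 ≤ lam ∧ ∃ x ∈ fundamentalCell a v u m₀, y = lam • x}

def conePoints (a : ι → ℕ) (v : κ → ι → ℤ) (u : ι → ℕ) (m₀ : ℕ) (m : ℕ) : Set (ι → ℕ) :=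
  {l | ∑ i, a i * l i = m ∧ (fun i => (l i : ℝ)) ∈ cellCone a v u m₀}

def cellPoint (u : ι → ℕ) (v : κ → ι → ℤ) (t : κ → ℝ) : ι → ℝ :=
  fun i => u i + ∑ j, t j * v j i

variable {a : ι → ℕ} {v : κ → ι → ℤ} {u : ι → ℕ} {m₀ m : ℕ}

theorem sum_mul_cellPoint (hv0 : ∀ j, ∑ i, (a i : ℤ) * v j i = 0)
    (hu : ∑ i, a i * u i = m₀) (t : κ → ℝ) : ∑ i, (a i : ℝ) * cellPoint u v t i = m₀ := by
  have hv0' : ∀ j, ∑ i, (a i : ℝ) * v j i = 0 := fun j => by exact_mod_cast hv0 j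
  simp only [cellPoint, mul_add, Finset.mul_sum, Finset.sum_add_distrib]
  rw [Finset.sum_comm]
  simp only [mul_left_comm (a _ : ℝ), ← Finset.mul_sum, hv0', mul_zero, Finset.sum_const_zero,
    add_zero]
  exact_mod_cast hu

theorem cellPoint_mem_fundamentalCell (hv0 : ∀ j, ∑ i, (a i : ℤ) * v j i = 0)
    (hu : ∑ i, a i * u i = m₀) {t : κ → ℝ} (ht : ∀ j, 0 ≤ t j ∧ t j < 1)
    (hx : ∀ i, 0 ≤ cellPoint u v t i) : cellPoint u v t ∈ fundamentalCell a v u m₀ :=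
  ⟨⟨t, ht, by ext i; simp [cellPoint, Finset.sum_apply]⟩, hx, sum_mul_cellPoint hv0 hu t⟩

theorem exists_eq_cellPoint_of_mem_fundamentalCell {x : ι → ℝ}
    (hx : x ∈ fundamentalCell a v u m₀) :
    ∃ t : κ → ℝ, (∀ j, 0 ≤ t j ∧ t j < 1) ∧ x = cellPoint u v t := by
  obtain ⟨⟨t, ht, rfl⟩, -⟩ := hx
  exact ⟨t, ht, by ext i; simp [cellPoint, Finset.sum_apply]⟩

theorem cellPoint_nonneg_of_subset_intrinsicInterior [Nontrivial ι] (ha : ∀ i, 0 < a i)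
    (hm₀ : 0 < m₀) (hv0 : ∀ j, ∑ i, (a i : ℤ) * v j i = 0) (hu : ∑ i, a i * u i = m₀)
    (hsub : fundamentalCell a v u m₀ ⊆
      intrinsicInterior ℝ {x : ι → ℝ | (∀ i, 0 ≤ x i) ∧ ∑ i, (a i : ℝ) * x i = m₀})
    {t : κ → ℝ} (ht : ∀ j, 0 ≤ t j ∧ t j < 1) (i : ι) : 0 ≤ cellPoint u v t i := by
  have hcube : IsPreconnected (Set.univ.pi fun _ : κ => Set.Ico (0 : ℝ) 1) :=
    (convex_pi fun _ _ => convex_Ico 0 1).isPreconnected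
  refine le_of_lt <| hcube.forall_pos_of_nonneg_imp_pos
    (f := cellPoint u v) (by unfold cellPoint; fun_prop) (fun t ht hx => ?_)
    (x₀ := 0) (by simp) (by simp [cellPoint]) t (fun j _ => ht j) i
  exact pos_of_mem_intrinsicInterior_weightedSimplex (fun i => by exact_mod_cast ha i)
    (by positivity) (hsub (cellPoint_mem_fundamentalCell hv0 hu (fun j => ht j trivial) hx))

theorem conePoints_eq_empty_of_not_dvd (h : ¬ Finset.univ.gcd a ∣ m) :
    conePoints a v u m₀ m = ∅ :=
  Set.eq_empty_of_forall_notMem fun _ hl =>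
    h (hl.1 ▸ Finset.dvd_sum fun i _ => (Finset.gcd_dvd (Finset.mem_univ i)).mul_right _)

theorem exists_basePoint (hm₀ : 0 < m₀)
    (hvspan : ∀ z : ι → ℤ, ∑ i, (a i : ℤ) * z i = 0 → z ∈ Submodule.span ℤ (Set.range v))
    (hu : ∑ i, a i * u i = m₀) (hm : Finset.univ.gcd a ∣ m) :
    ∃ p : ι → ℤ, ∃ β : κ → ℝ, ∑ i, (a i : ℤ) * p i = m ∧
      ∀ i, (p i : ℝ) + ∑ j, β j * v j i = m / m₀ * u i := by
  -- `p = q w` for a Bézout vector `w`; `β` comes from `d u - m₀ w ∈ H`.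
  obtain ⟨q, rfl⟩ := hm
  obtain ⟨w, hw⟩ := Finset.exists_sum_mul_eq_gcd a
  set d := Finset.univ.gcd a
  have hu' : ∑ i, (a i : ℤ) * u i = m₀ := by exact_mod_cast hu
  have hker : ∑ i, (a i : ℤ) * (d * u i - m₀ * w i) = 0 := by
    simp only [mul_sub, mul_left_comm (a _ : ℤ), Finset.sum_sub_distrib, ← Finset.mul_sum, hu',
      hw]
    ring
  obtain ⟨e, he⟩ := (Submodule.mem_span_range_iff_exists_fun ℤ).mp (hvspan _ hker)
  have he' : ∀ i, ∑ j, (e j : ℝ) * v j i = d * u i - m₀ * w i := fun i => by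
    exact_mod_cast (by simpa [Finset.sum_apply] using congrFun he i)
  refine ⟨fun i => q * w i, fun j => q * e j / m₀, ?_, fun i => ?_⟩
  · simp only [mul_left_comm (a _ : ℤ), ← Finset.mul_sum, hw]
    push_cast
    ring
  · have hsum : ∑ j, q * (e j : ℝ) / m₀ * v j i = q / m₀ * ∑ j, (e j : ℝ) * v j i := by
      rw [Finset.mul_sum]
      exact Finset.sum_congr rfl fun j _ => by ring
    rw [hsum, he']
    push_cast
    field_simp
    ring

variable [DecidableEq κ]

theorem image_conePoints_subset (hm₀ : 0 < m₀) (hm : 0 < m)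
    (hvspan : ∀ z : ι → ℤ, ∑ i, (a i : ℤ) * z i = 0 → z ∈ Submodule.span ℤ (Set.range v))
    (hvli : LinearIndependent ℤ v) {p : ι → ℤ} (hp : ∑ i, (a i : ℤ) * p i = m) {β : κ → ℝ}
    (hβ : ∀ i, (p i : ℝ) + ∑ j, β j * v j i = m / m₀ * u i) :
    (fun l i => (l i : ℤ)) '' conePoints a v u m₀ m ⊆
      latticeMap p v '' ↑(latticeBox β (m / m₀)) := by
  rintro _ ⟨l, ⟨hlm, lam, hlam, x, hx, hlx⟩, rfl⟩
  obtain ⟨t, ht, hxt⟩ := exists_eq_cellPoint_of_mem_fundamentalCell hx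
  have hl : ∀ i, (l i : ℝ) = lam * x i := fun i => by simpa using congrFun hlx i
  have hlam_eq : lam = m / m₀ := by
    have hsum : ∑ i, (a i : ℝ) * l i = m := by exact_mod_cast hlm
    rw [eq_div_iff (by positivity), ← hsum, ← hx.2.2, Finset.mul_sum]
    exact Finset.sum_congr rfl fun i _ => by rw [hl]; ring
  have hker : ∑ i, (a i : ℤ) * ((l i : ℤ) - p i) = 0 := by
    have hlm' : ∑ i, (a i : ℤ) * l i = m := by exact_mod_cast hlm
    simp only [mul_sub, Finset.sum_sub_distrib, hp, hlm', sub_self]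
  obtain ⟨c, hc⟩ := (Submodule.mem_span_range_iff_exists_fun ℤ).mp (hvspan _ hker)
  have hci : ∀ i, ∑ j, (c j : ℝ) * v j i = l i - p i := fun i => by
    exact_mod_cast (by simpa [Finset.sum_apply] using congrFun hc i)
  have hcoef : ∀ j, (c j : ℝ) = β j + lam * t j := by
    refine Fintype.linearIndependent_iffₛ.mp hvli.intCast _ _ (funext fun i => ?_)
    simp only [Finset.sum_apply, Pi.smul_apply, smul_eq_mul, add_mul, Finset.sum_add_distrib,
      mul_assoc, ← Finset.mul_sum]
    rw [hci, hl, hxt, hlam_eq]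
    unfold cellPoint
    linear_combination -(hβ i)
  refine ⟨c, mem_latticeBox.mpr fun j => ?_, ?_⟩
  · have hlam_pos : 0 < lam := by rw [hlam_eq]; positivity
    rw [hcoef]
    constructor <;> nlinarith [ht j]
  · rw [latticeMap, hc]
    ext i
    simp

theorem latticeBox_subset_image_conePoints (hm₀ : 0 < m₀) (hm : 0 < m)
    (hv0 : ∀ j, ∑ i, (a i : ℤ) * v j i = 0) (hu : ∑ i, a i * u i = m₀) {p : ι → ℤ} {β : κ → ℝ}
    (hβ : ∀ i, (p i : ℝ) + ∑ j, β j * v j i = m / m₀ * u i)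
    (hnonneg : ∀ t : κ → ℝ, (∀ j, 0 ≤ t j ∧ t j < 1) → ∀ i, 0 ≤ cellPoint u v t i) :
    latticeMap p v '' ↑(latticeBox β (m / m₀)) ⊆
      (fun l i => (l i : ℤ)) '' conePoints a v u m₀ m := by
  rintro _ ⟨c, hc, rfl⟩
  set lam : ℝ := m / m₀
  have hlam : 0 < lam := by positivity
  set t : κ → ℝ := fun j => (c j - β j) / lam
  have ht : ∀ j, 0 ≤ t j ∧ t j < 1 := fun j => by
    obtain ⟨hlo, hhi⟩ := mem_latticeBox.mp hc j
    exact ⟨div_nonneg (by linarith) hlam.le, (div_lt_one hlam).mpr (by linarith)⟩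
  set x := cellPoint u v t
  have hx : x ∈ fundamentalCell a v u m₀ := cellPoint_mem_fundamentalCell hv0 hu ht (hnonneg t ht)
  have hz : ∀ i, (latticeMap p v c i : ℝ) = lam * x i := fun i => by
    have hsum : lam * ∑ j, t j * v j i = ∑ j, (c j : ℝ) * v j i - ∑ j, β j * v j i := by
      rw [Finset.mul_sum, ← Finset.sum_sub_distrib]
      refine Finset.sum_congr rfl fun j _ => ?_
      simp only [t, ← mul_assoc, mul_div_cancel₀ _ hlam.ne']
      ring
    rw [latticeMap_apply]
    unfold x cellPoint
    push_cast
    linear_combination hβ i - hsum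
  have hz_nonneg : ∀ i, 0 ≤ latticeMap p v c i := fun i => by
    have : (0 : ℝ) ≤ latticeMap p v c i := by rw [hz]; exact mul_nonneg hlam.le (hx.2.1 i)
    exact_mod_cast this
  have hcast : ∀ i, (((latticeMap p v c i).toNat : ℕ) : ℝ) = lam * x i := fun i => by
    rw [← hz, ← Int.cast_natCast, Int.toNat_of_nonneg (hz_nonneg i)]
  refine ⟨fun i => (latticeMap p v c i).toNat, ⟨?_, lam, hlam.le, x, hx, funext hcast⟩,
    funext fun i => Int.toNat_of_nonneg (hz_nonneg i)⟩
  have : ∑ i, (a i : ℝ) * ((latticeMap p v c i).toNat : ℕ) = m := by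
    simp only [hcast, mul_left_comm _ lam, ← Finset.mul_sum, hx.2.2, lam]
    field_simp
  exact_mod_cast this

theorem conePoints_finite_and_ncard_le (hm₀ : 0 < m₀) (hm : 0 < m)
    (hvspan : ∀ z : ι → ℤ, ∑ i, (a i : ℤ) * z i = 0 → z ∈ Submodule.span ℤ (Set.range v))
    (hvli : LinearIndependent ℤ v) {p : ι → ℤ} (hp : ∑ i, (a i : ℤ) * p i = m) {β : κ → ℝ}
    (hβ : ∀ i, (p i : ℝ) + ∑ j, β j * v j i = m / m₀ * u i) :
    (conePoints a v u m₀ m).Finite ∧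
      (conePoints a v u m₀ m).ncard ≤ (latticeBox β (m / m₀)).card := by
  have hcast : Function.Injective fun l : ι → ℕ => fun i => (l i : ℤ) :=
    Nat.cast_injective.comp_left
  have hsub := image_conePoints_subset hm₀ hm hvspan hvli hp hβ
  have hfin := (latticeBox β (m / m₀)).finite_toSet.image (latticeMap p v)
  refine ⟨Set.Finite.of_finite_image (hfin.subset hsub) hcast.injOn, ?_⟩
  calc (conePoints a v u m₀ m).ncard
      = ((fun l i => (l i : ℤ)) '' conePoints a v u m₀ m).ncard :=
        (Set.ncard_image_of_injective _ hcast).symm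
    _ ≤ _ := Set.ncard_le_ncard hsub hfin
    _ = _ := by rw [Set.ncard_image_of_injective _ (latticeMap_injective p hvli),
      Set.ncard_coe_finset]

theorem ncard_conePoints_eq_card_latticeBox (hm₀ : 0 < m₀) (hm : 0 < m)
    (hv0 : ∀ j, ∑ i, (a i : ℤ) * v j i = 0)
    (hvspan : ∀ z : ι → ℤ, ∑ i, (a i : ℤ) * z i = 0 → z ∈ Submodule.span ℤ (Set.range v))
    (hvli : LinearIndependent ℤ v) (hu : ∑ i, a i * u i = m₀) {p : ι → ℤ}
    (hp : ∑ i, (a i : ℤ) * p i = m) {β : κ → ℝ}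
    (hβ : ∀ i, (p i : ℝ) + ∑ j, β j * v j i = m / m₀ * u i)
    (hnonneg : ∀ t : κ → ℝ, (∀ j, 0 ≤ t j ∧ t j < 1) → ∀ i, 0 ≤ cellPoint u v t i) :
    (conePoints a v u m₀ m).ncard = (latticeBox β (m / m₀)).card := by
  have heq := (image_conePoints_subset hm₀ hm hvspan hvli hp hβ).antisymm
    (latticeBox_subset_image_conePoints hm₀ hm hv0 hu hβ hnonneg)
  have hcast : Function.Injective fun l : ι → ℕ => fun i => (l i : ℤ) :=
    Nat.cast_injective.comp_left
  rw [← Set.ncard_image_of_injective _ hcast, heq,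
    Set.ncard_image_of_injective _ (latticeMap_injective p hvli), Set.ncard_coe_finset]

theorem conePoints_finite_and_ncard_le_pow (hm₀ : 0 < m₀) (hm : 0 < m)
    (hvspan : ∀ z : ι → ℤ, ∑ i, (a i : ℤ) * z i = 0 → z ∈ Submodule.span ℤ (Set.range v))
    (hvli : LinearIndependent ℤ v) (hu : ∑ i, a i * u i = m₀) :
    (conePoints a v u m₀ m).Finite ∧
      ((conePoints a v u m₀ m).ncard : ℝ) ≤ ((m : ℝ) / m₀ + 1) ^ Fintype.card κ := by
  by_cases hd : Finset.univ.gcd a ∣ m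
  · obtain ⟨p, β, hp, hβ⟩ := exists_basePoint hm₀ hvspan hu hd
    obtain ⟨hfin, hle⟩ := conePoints_finite_and_ncard_le hm₀ hm hvspan hvli hp hβ
    exact ⟨hfin, (Nat.cast_le.mpr hle).trans (card_latticeBox_le β (by positivity))⟩
  · rw [conePoints_eq_empty_of_not_dvd hd, Set.ncard_empty, Nat.cast_zero]
    exact ⟨Set.finite_empty, by positivity⟩

theorem pow_sub_one_le_ncard_conePoints (hm₀ : 0 < m₀) (hm : m₀ ≤ m)
    (hv0 : ∀ j, ∑ i, (a i : ℤ) * v j i = 0)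
    (hvspan : ∀ z : ι → ℤ, ∑ i, (a i : ℤ) * z i = 0 → z ∈ Submodule.span ℤ (Set.range v))
    (hvli : LinearIndependent ℤ v) (hu : ∑ i, a i * u i = m₀) (hd : Finset.univ.gcd a ∣ m)
    (hnonneg : ∀ t : κ → ℝ, (∀ j, 0 ≤ t j ∧ t j < 1) → ∀ i, 0 ≤ cellPoint u v t i) :
    ((m : ℝ) / m₀ - 1) ^ Fintype.card κ ≤ (conePoints a v u m₀ m).ncard := by
  obtain ⟨p, β, hp, hβ⟩ := exists_basePoint hm₀ hvspan hu hd
  rw [ncard_conePoints_eq_card_latticeBox hm₀ (hm₀.trans_le hm) hv0 hvspan hvli hu hp hβ hnonneg]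
  exact pow_sub_one_le_card_latticeBox β ((one_le_div (by positivity)).mpr (by exact_mod_cast hm))

end ConePoints

/-- Let `a₁, …, a_r ≥ 1` (`r ≥ 2`) with `d = gcd`, let `(v₁, …, v_{r-1})` be a
`ℤ`-basis of `H = {z ∈ ℤ^r : ∑ a i z i = 0}`, let `H_m = {l ∈ ℕ^r : ∑ a i l i = m}`. Fix
`m₀ ≥ 1` and `u ∈ H_{m₀}`, set `C_u = (u + ∑_j [0,1)·v j) ∩ (m₀·Δ_a)` and
`K_u = ℝ_{≥0} · C_u`. Then (i) there is `K > 0` with `card (K_u ∩ H_m) ≤ K (m/m₀)^{r-1}` for all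
`m ≥ 1`, and (ii) if `C_u` lies in the relative interior of `m₀·Δ_a` (in its affine hyperplane),
then `card (K_u ∩ H_m) · (m₀/m)^{r-1} → 1` as `m → ∞` along multiples of `d`. -/
theorem stmt11 (r : ℕ) (hr : 2 ≤ r) (a : Fin r → ℕ) (ha : ∀ i, 1 ≤ a i)
    (d : ℕ) (hd : d = Finset.univ.gcd a)
    (v : Fin (r - 1) → Fin r → ℤ)
    (hv0 : ∀ j, ∑ i, (a i : ℤ) * v j i = 0)
    (hvli : LinearIndependent ℤ v)
    (hvspan : ∀ z : Fin r → ℤ, (∑ i, (a i : ℤ) * z i = 0) →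
      z ∈ Submodule.span ℤ (Set.range v))
    (m₀ : ℕ) (hm₀ : 1 ≤ m₀) (u : Fin r → ℕ) (hu : ∑ i, a i * u i = m₀)
    (Cu : Set (Fin r → ℝ))
    (hCu : Cu = {x | (∃ t : Fin (r - 1) → ℝ, (∀ j, 0 ≤ t j ∧ t j < 1) ∧
          x = (fun i => (u i : ℝ)) + ∑ j, t j • (fun i => (v j i : ℝ))) ∧
        (∀ i, 0 ≤ x i) ∧ ∑ i, (a i : ℝ) * x i = m₀})
    (Ku : Set (Fin r → ℝ))
    (hKu : Ku = {y | ∃ lam : ℝ, 0 ≤ lam ∧ ∃ x ∈ Cu, y = lam • x})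
    (S : ℕ → Set (Fin r → ℕ))
    (hS : ∀ m, S m = {l | ∑ i, a i * l i = m ∧ (fun i => (l i : ℝ)) ∈ Ku}) :
    (∃ K : ℝ, 0 < K ∧ ∀ m : ℕ, 1 ≤ m → (S m).Finite ∧
        ((S m).ncard : ℝ) ≤ K * ((m : ℝ) / (m₀ : ℝ)) ^ (r - 1)) ∧
    ((Cu ⊆ intrinsicInterior ℝ
        {x : Fin r → ℝ | (∀ i, 0 ≤ x i) ∧ ∑ i, (a i : ℝ) * x i = m₀}) →
      Filter.Tendsto
        (fun n : ℕ => ((S (d * n)).ncard : ℝ) * ((m₀ : ℝ) / ((d * n : ℕ) : ℝ)) ^ (r - 1))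
        Filter.atTop (nhds 1)) := by
  subst hCu hKu hd
  obtain rfl : S = conePoints a v u m₀ := funext hS
  have hm₀' : 0 < m₀ := hm₀
  refine ⟨⟨(m₀ + 1) ^ (r - 1), by positivity, fun m hm => ?_⟩, fun hsub => ?_⟩
  · obtain ⟨hfin, hle⟩ := conePoints_finite_and_ncard_le_pow hm₀' hm hvspan hvli hu
    refine ⟨hfin, hle.trans ?_⟩
    rw [Fintype.card_fin, ← mul_pow]
    have : (1 : ℝ) ≤ m := by exact_mod_cast hm
    gcongr
    rw [add_mul, one_mul, mul_div_cancel₀ _ (by positivity)]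
    linarith
  · have : Nontrivial (Fin r) := Fin.nontrivial_iff_two_le.mpr hr
    have hnonneg (t : Fin (r - 1) → ℝ) (ht : ∀ j, 0 ≤ t j ∧ t j < 1) (i : Fin r) :=
      cellPoint_nonneg_of_subset_intrinsicInterior ha hm₀' hv0 hu hsub ht i
    have hd_pos : 0 < Finset.univ.gcd a := Nat.pos_of_ne_zero fun h =>
      (Nat.one_le_iff_ne_zero.mp (ha ⟨0, by omega⟩))
        (Finset.gcd_eq_zero_iff.mp h _ (Finset.mem_univ _))
    have hdn : Tendsto (fun n : ℕ => Finset.univ.gcd a * n) atTop atTop :=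
      tendsto_id.const_mul_atTop' hd_pos
    have hx : Tendsto (fun n : ℕ => ((Finset.univ.gcd a * n : ℕ) : ℝ) / m₀) atTop atTop :=
      (tendsto_natCast_atTop_atTop.comp hdn).atTop_div_const (by positivity)
    refine (tendsto_mul_inv_pow_of_pow_sub_one_le_of_le_pow_add_one (r - 1) hx ?_ ?_).congr
      fun n => by rw [inv_div]
    · filter_upwards [hdn.eventually_ge_atTop m₀] with n hn
      simpa using pow_sub_one_le_ncard_conePoints hm₀' hn hv0 hvspan hvli hu
        (dvd_mul_right _ n) hnonneg
    · filter_upwards [hdn.eventually_ge_atTop 1] with n hn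
      simpa using (conePoints_finite_and_ncard_le_pow hm₀' hn hvspan hvli hu).2
end

section
/- Let r ≥ 2 and let a_1, …, a_r ≥ 1 be integers. Let H = {z ∈ ℤ^r : Σ_i a_i z_i = 0}, let (v_1, …, v_{r−1}) be a ℤ-basis of H, and for m_0 ∈ ℕ let H_{m_0} = {l ∈ ℕ^r : Σ_i a_i l_i = m_0}. For u ∈ H_{m_0} set C_u = (u + Σ_{j=1}^{r−1} [0,1)·v_j) ∩ (m_0·Δ_a). Then there is a constant K > 0 (depending only on a and the v_j) such that for all m_0 ≥ 1, the number of u ∈ H_{m_0} for which C_u meets the relative boundary of m_0·Δ_a (taken in the affine hyperplane {t ∈ ℝ^r : Σ_i a_i t_i = m_0}) is at most K·m_0^{r−2}. -/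
open Finset

lemma notFrontier (r : ℕ) (a : Fin r → ℕ) (m₀ : ℕ)
    (x : Fin r → ℝ) (hx : ∀ i, 0 < x i) :
    x ∉ intrinsicFrontier ℝ {y : Fin r → ℝ | (∀ i, 0 ≤ y i) ∧ ∑ i, (a i : ℝ) * y i = m₀} := by
  set s : Set (Fin r → ℝ) := {y : Fin r → ℝ | (∀ i, 0 ≤ y i) ∧ ∑ i, (a i : ℝ) * y i = m₀} with hs
  intro hmem
  rw [intrinsicFrontier] at hmem
  obtain ⟨p, hp, hpx⟩ := hmem
  -- every point of the affine span satisfies the sum equation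
  have key : ∀ q ∈ affineSpan ℝ s, ∑ i, (a i : ℝ) * q i = (m₀ : ℝ) := by
    set f : (Fin r → ℝ) →ₗ[ℝ] ℝ := ∑ i, (a i : ℝ) • LinearMap.proj i with hf
    have hfapp : ∀ y : Fin r → ℝ, f y = ∑ i, (a i : ℝ) * y i := by
      intro y
      simp [hf, LinearMap.sum_apply, LinearMap.smul_apply, LinearMap.proj_apply, smul_eq_mul]
    set P : AffineSubspace ℝ (Fin r → ℝ) :=
      AffineSubspace.comap f.toAffineMap (AffineSubspace.mk' (m₀ : ℝ) ⊥) with hP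
    have hfP : ∀ y : Fin r → ℝ, y ∈ P ↔ ∑ i, (a i : ℝ) * y i = (m₀ : ℝ) := by
      intro y
      rw [hP, AffineSubspace.mem_comap, AffineSubspace.mem_mk']
      simp [hfapp, sub_eq_zero]
    have hle : affineSpan ℝ s ≤ P := affineSpan_le.mpr (fun y hy => (hfP y).mpr hy.2)
    intro q hq
    exact (hfP q).mp (hle hq)
  have hint : p ∈ interior ((Subtype.val : affineSpan ℝ s → (Fin r → ℝ)) ⁻¹' s) := by
    rw [mem_interior_iff_mem_nhds]
    have hU : IsOpen {y : Fin r → ℝ | ∀ i, 0 < y i} := by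
      have : {y : Fin r → ℝ | ∀ i, 0 < y i} = ⋂ i, {y : Fin r → ℝ | 0 < y i} := by
        ext y; simp
      rw [this]
      exact isOpen_iInter_of_finite fun i =>
        isOpen_lt continuous_const (continuous_apply i)
    have hpU : (p : Fin r → ℝ) ∈ {y : Fin r → ℝ | ∀ i, 0 < y i} := by
      rw [hpx]; exact hx
    refine Filter.mem_of_superset ((hU.preimage continuous_subtype_val).mem_nhds hpU) ?_
    intro q hq
    exact ⟨fun i => (hq i).le, key q q.2⟩
  rw [frontier] at hp
  exact hp.2 hint


lemma countLemma (r : ℕ) (hr : 2 ≤ r) (a : Fin r → ℕ) (ha : ∀ i, 1 ≤ a i)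
    (M m₀ : ℕ) :
    {u : Fin r → ℕ | ∑ i, a i * u i = m₀ ∧ ∃ i, u i ≤ M}.Finite ∧
    {u : Fin r → ℕ | ∑ i, a i * u i = m₀ ∧ ∃ i, u i ≤ M}.ncard
      ≤ r * (M + 1) * (m₀ + 1) ^ (r - 2) := by
  classical
  set S : Set (Fin r → ℕ) := {u : Fin r → ℕ | ∑ i, a i * u i = m₀ ∧ ∃ i, u i ≤ M} with hS
  -- every coordinate bounded by m₀
  have hbound : ∀ u ∈ S, ∀ j, u j ≤ m₀ := by
    intro u hu j
    calc u j ≤ a j * u j := Nat.le_mul_of_pos_left _ (ha j)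
    _ ≤ ∑ i, a i * u i := Finset.single_le_sum (f := fun i => a i * u i) (fun i _ => Nat.zero_le _) (mem_univ j)
    _ = m₀ := hu.1
  have hfin : S.Finite := by
    have : S ⊆ Set.pi Set.univ (fun _ : Fin r => Set.Iic m₀) := by
      intro u hu j _
      exact hbound u hu j
    exact (Set.Finite.pi fun _ => Set.finite_Iic m₀).subset this
  refine ⟨hfin, ?_⟩
  have h0 : 0 < r := by omega
  have h1 : 1 < r := by omega
  set i0 : Fin r := ⟨0, h0⟩ with hi0
  set i1 : Fin r := ⟨1, h1⟩ with hi1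
  set k : Fin r → Fin r := fun i => if i = i0 then i1 else i0 with hk
  have hki : ∀ i, k i ≠ i := by
    intro i
    by_cases h : i = i0
    · simp [hk, h, hi0, hi1, Fin.ext_iff]
    · simp [hk, h]
      exact fun h' => h h'.symm
  set I : (Fin r → ℕ) → Fin r := fun u =>
    if h : ∃ i, u i ≤ M then h.choose else i0 with hI
  set Φ : (Fin r → ℕ) → Fin r × (Fin r → ℕ) := fun u =>
    (I u, fun j => if j = k (I u) then 0 else u j) with hΦ
  have hIu : ∀ u ∈ S, u (I u) ≤ M := by
    intro u hu
    rw [hI]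
    simp only
    rw [dif_pos hu.2]
    exact hu.2.choose_spec
  set t : Set (Fin r × (Fin r → ℕ)) :=
    {p | p.2 (k p.1) = 0 ∧ p.2 p.1 ≤ M ∧ ∀ j, p.2 j ≤ m₀} with ht
  -- target finset
  set B : Fin r → Fin r → Finset ℕ := fun i j =>
    if j = k i then {0} else if j = i then Finset.range (M + 1) else Finset.range (m₀ + 1) with hB
  set F : Finset (Fin r × (Fin r → ℕ)) :=
    Finset.univ.biUnion (fun i => {i} ×ˢ Fintype.piFinset (B i)) with hF
  have htF : t ⊆ ↑F := by
    rintro ⟨i, g⟩ ⟨hg0, hgM, hgm⟩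
    simp only [hF, Finset.coe_biUnion, Set.mem_iUnion, Finset.mem_coe, Finset.mem_biUnion]
    refine ⟨i, mem_univ i, ?_⟩
    rw [Finset.mem_product]
    refine ⟨by simp, ?_⟩
    rw [Fintype.mem_piFinset]
    intro j
    rw [hB]
    simp only
    by_cases h1 : j = k i
    · subst h1; rw [if_pos rfl, Finset.mem_singleton]; exact hg0
    · rw [if_neg h1]
      by_cases h2 : j = i
      · subst h2; rw [if_pos rfl, Finset.mem_range]; exact Nat.lt_succ_of_le hgM
      · rw [if_neg h2, Finset.mem_range]; exact Nat.lt_succ_of_le (hgm j)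
  have hmaps : ∀ u ∈ S, Φ u ∈ t := by
    intro u hu
    refine ⟨?_, ?_, ?_⟩
    · show (if k (I u) = k (I u) then 0 else u (k (I u))) = 0
      rw [if_pos rfl]
    · show (if (I u) = k (I u) then 0 else u (I u)) ≤ M
      rw [if_neg (Ne.symm (hki (I u)))]
      exact hIu u hu
    · intro j
      show (if j = k (I u) then 0 else u j) ≤ m₀
      by_cases h : j = k (I u)
      · rw [if_pos h]; exact Nat.zero_le _
      · rw [if_neg h]; exact hbound u hu j
  have hinj : Set.InjOn Φ S := by
    intro u hu u' hu' heq
    have hI2 : I u = I u' := congrArg Prod.fst heq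
    have hg : ∀ j, (if j = k (I u) then 0 else u j) = (if j = k (I u) then 0 else u' j) := by
      intro j
      have h2 : (fun j => if j = k (I u) then 0 else u j)
          = (fun j => if j = k (I u') then 0 else u' j) := congrArg Prod.snd heq
      rw [← hI2] at h2
      exact congrFun h2 j
    have hoff : ∀ j, j ≠ k (I u) → u j = u' j := by
      intro j hj
      have := hg j
      rwa [if_neg hj, if_neg hj] at this
    have hsum : ∑ i, a i * u i = ∑ i, a i * u' i := by rw [hu.1, hu'.1]
    have hkkm : k (I u) ∈ (univ : Finset (Fin r)) := mem_univ _
    rw [← Finset.add_sum_erase _ _ hkkm, ← Finset.add_sum_erase _ _ hkkm] at hsum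
    have hrest : ∑ j ∈ univ.erase (k (I u)), a j * u j
        = ∑ j ∈ univ.erase (k (I u)), a j * u' j := by
      refine Finset.sum_congr rfl ?_
      intro j hj
      rw [hoff j (Finset.ne_of_mem_erase hj)]
    rw [hrest] at hsum
    have hck : a (k (I u)) * u (k (I u)) = a (k (I u)) * u' (k (I u)) :=
      Nat.add_right_cancel hsum
    have huk : u (k (I u)) = u' (k (I u)) :=
      Nat.eq_of_mul_eq_mul_left (ha _) hck
    funext j
    by_cases h : j = k (I u)
    · rw [h]; exact huk
    · exact hoff j h
  have htfin : t.Finite := F.finite_toSet.subset htF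
  have hc1 : S.ncard ≤ t.ncard := Set.ncard_le_ncard_of_injOn Φ hmaps hinj htfin
  have hc2 : t.ncard ≤ F.card := by
    have := Set.ncard_le_ncard htF F.finite_toSet
    rwa [Set.ncard_coe_finset] at this
  have hc3 : F.card ≤ r * ((M + 1) * (m₀ + 1) ^ (r - 2)) := by
    calc F.card ≤ ∑ i, ({i} ×ˢ Fintype.piFinset (B i)).card := Finset.card_biUnion_le
    _ ≤ ∑ _i : Fin r, (M + 1) * (m₀ + 1) ^ (r - 2) := by
        apply Finset.sum_le_sum
        intro i _
        rw [Finset.card_product, Finset.card_singleton, one_mul, Fintype.card_piFinset]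
        apply le_of_eq
        have hc : ∀ j, (B i j).card = if j = k i then 1 else if j = i then M + 1 else m₀ + 1 := by
          intro j
          show (if j = k i then ({0} : Finset ℕ) else if j = i then Finset.range (M+1) else Finset.range (m₀+1)).card = _
          by_cases h1 : j = k i
          · rw [if_pos h1, if_pos h1, Finset.card_singleton]
          · rw [if_neg h1, if_neg h1]
            by_cases h2 : j = i
            · rw [if_pos h2, if_pos h2, Finset.card_range]
            · rw [if_neg h2, if_neg h2, Finset.card_range]
        calc ∏ j, (B i j).card
            = ∏ j, (if j = k i then 1 else if j = i then M + 1 else m₀ + 1) :=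
              Finset.prod_congr rfl (fun j _ => hc j)
        _ = (M + 1) * (m₀ + 1) ^ (r - 2) := by
          set c : Fin r → ℕ := fun j => if j = k i then 1 else if j = i then M + 1 else m₀ + 1 with hcdef
          have hik : i ∈ (univ : Finset (Fin r)) := mem_univ i
          rw [← Finset.mul_prod_erase _ c hik]
          have hk2 : k i ∈ univ.erase i := Finset.mem_erase.mpr ⟨hki i, mem_univ _⟩
          rw [← Finset.mul_prod_erase _ c hk2]
          have hci : c i = M + 1 := by
            show (if i = k i then 1 else if i = i then M + 1 else m₀ + 1) = M + 1
            rw [if_neg (Ne.symm (hki i)), if_pos rfl]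
          have hck2 : c (k i) = 1 := by
            show (if k i = k i then 1 else if k i = i then M + 1 else m₀ + 1) = 1
            rw [if_pos rfl]
          have hrest : ∀ j ∈ (univ.erase i).erase (k i), c j = m₀ + 1 := by
            intro j hj
            obtain ⟨hj1, hj2⟩ := Finset.mem_erase.mp hj
            obtain ⟨hj3, _⟩ := Finset.mem_erase.mp hj2
            show (if j = k i then 1 else if j = i then M + 1 else m₀ + 1) = m₀ + 1
            rw [if_neg hj1, if_neg hj3]
          rw [Finset.prod_congr rfl hrest, Finset.prod_const, hci, hck2]
          have hcard : ((univ.erase i).erase (k i)).card = r - 2 := by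
            rw [Finset.card_erase_of_mem hk2, Finset.card_erase_of_mem hik, card_univ,
              Fintype.card_fin]
            omega
          rw [hcard, one_mul]
    _ = r * ((M + 1) * (m₀ + 1) ^ (r - 2)) := by
        rw [Finset.sum_const, card_univ, Fintype.card_fin, smul_eq_mul]
  calc S.ncard ≤ F.card := le_trans hc1 hc2
  _ ≤ r * ((M + 1) * (m₀ + 1) ^ (r - 2)) := hc3
  _ = r * (M + 1) * (m₀ + 1) ^ (r - 2) := (mul_assoc _ _ _).symm



/-- Let `a₁, …, a_r ≥ 1` (`r ≥ 2`) and let `(v₁, …, v_{r-1})` be a `ℤ`-basis of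
`H = {z ∈ ℤ^r : ∑ a i z i = 0}`. For `u ∈ H_{m₀}` set
`C_u = (u + ∑_j [0,1)·v j) ∩ (m₀·Δ_a)`. Then there is a constant `K > 0` such that for all
`m₀ ≥ 1`, the number of `u ∈ H_{m₀}` for which `C_u` meets the relative boundary of `m₀·Δ_a`
(in its affine hyperplane) is at most `K · m₀^{r-2}`. -/
theorem stmt12 (r : ℕ) (hr : 2 ≤ r) (a : Fin r → ℕ) (ha : ∀ i, 1 ≤ a i)
    (v : Fin (r - 1) → Fin r → ℤ)
    (hv0 : ∀ j, ∑ i, (a i : ℤ) * v j i = 0)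
    (hvli : LinearIndependent ℤ v)
    (hvspan : ∀ z : Fin r → ℤ, (∑ i, (a i : ℤ) * z i = 0) →
      z ∈ Submodule.span ℤ (Set.range v)) :
    ∃ K : ℝ, 0 < K ∧ ∀ m₀ : ℕ, 1 ≤ m₀ →
      let T : Set (Fin r → ℕ) := {u | ∑ i, a i * u i = m₀ ∧
        ({x : Fin r → ℝ | (∃ t : Fin (r - 1) → ℝ, (∀ j, 0 ≤ t j ∧ t j < 1) ∧
              x = (fun i => (u i : ℝ)) + ∑ j, t j • (fun i => (v j i : ℝ))) ∧
            (∀ i, 0 ≤ x i) ∧ ∑ i, (a i : ℝ) * x i = m₀} ∩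
          intrinsicFrontier ℝ
            {x : Fin r → ℝ | (∀ i, 0 ≤ x i) ∧ ∑ i, (a i : ℝ) * x i = m₀}).Nonempty}
      T.Finite ∧ ((T.ncard : ℝ) ≤ K * (m₀ : ℝ) ^ (r - 2)) := by
    classical
  set M : ℕ := ∑ j, ∑ i, (v j i).natAbs with hM
  refine ⟨(r * (M + 1) * 2 ^ (r - 2) : ℕ), ?_, ?_⟩
  · have : 0 < r * (M + 1) * 2 ^ (r - 2) := by positivity
    exact_mod_cast this
  intro m₀ hm₀
  intro T
  set S : Set (Fin r → ℕ) := {u : Fin r → ℕ | ∑ i, a i * u i = m₀ ∧ ∃ i, u i ≤ M} with hS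
  have hTS : T ⊆ S := by
    rintro u ⟨hsum, x, ⟨⟨t, ht, hxe⟩, hnn, hxs⟩, hfr⟩
    refine ⟨hsum, ?_⟩
    -- some coordinate of x is zero
    have hz : ∃ i, x i = 0 := by
      by_contra h
      push_neg at h
      exact notFrontier r a m₀ x (fun i => lt_of_le_of_ne (hnn i) (Ne.symm (h i))) hfr
    obtain ⟨i, hxi⟩ := hz
    refine ⟨i, ?_⟩
    have hxi' : x i = (u i : ℝ) + ∑ j, t j * (v j i : ℝ) := by
      rw [hxe]
      simp [Finset.sum_apply]
    have hui : (u i : ℝ) = ∑ j, (-(t j * (v j i : ℝ))) := by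
      have hne : ∑ j, (-(t j * (v j i : ℝ))) = -∑ j, t j * (v j i : ℝ) := by
        simp
      rw [hne]
      have := hxi'.symm.trans hxi
      linarith
    have hle : (u i : ℝ) ≤ (M : ℝ) := by
      rw [hui]
      calc ∑ j, (-(t j * (v j i : ℝ))) ≤ ∑ j, ((v j i).natAbs : ℝ) := by
            apply Finset.sum_le_sum
            intro j _
            have h1 : -(t j * (v j i : ℝ)) ≤ |t j * (v j i : ℝ)| := neg_le_abs _
            have h2 : |t j * (v j i : ℝ)| = |t j| * |(v j i : ℝ)| := abs_mul _ _
            have h3 : |t j| ≤ 1 := by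
              rw [abs_of_nonneg (ht j).1]; exact (ht j).2.le
            have h4 : ((v j i).natAbs : ℝ) = |(v j i : ℝ)| := by
              rw [Nat.cast_natAbs]; push_cast; ring
            calc -(t j * (v j i : ℝ)) ≤ |t j| * |(v j i : ℝ)| := by rw [← h2]; exact h1
            _ ≤ 1 * |(v j i : ℝ)| := by
                apply mul_le_mul_of_nonneg_right h3 (abs_nonneg _)
            _ = ((v j i).natAbs : ℝ) := by rw [one_mul, h4]
      _ ≤ (M : ℝ) := by
            rw [hM]
            push_cast
            apply Finset.sum_le_sum
            intro j _
            exact Finset.single_le_sum (f := fun i' => ((v j i').natAbs : ℝ))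
              (fun i' _ => by positivity) (mem_univ i)
    exact_mod_cast hle
  obtain ⟨hSfin, hScard⟩ := countLemma r hr a ha M m₀
  have hTfin : T.Finite := hSfin.subset hTS
  refine ⟨hTfin, ?_⟩
  have h1 : T.ncard ≤ S.ncard := Set.ncard_le_ncard hTS hSfin
  have h2 : T.ncard ≤ r * (M + 1) * (m₀ + 1) ^ (r - 2) := le_trans h1 hScard
  have h3 : (m₀ + 1) ^ (r - 2) ≤ (2 * m₀) ^ (r - 2) := by
    apply Nat.pow_le_pow_left
    rw [two_mul]
    exact Nat.add_le_add (le_refl m₀) hm₀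
  have h4 : T.ncard ≤ r * (M + 1) * 2 ^ (r - 2) * m₀ ^ (r - 2) := by
    calc T.ncard ≤ r * (M + 1) * (m₀ + 1) ^ (r - 2) := h2
    _ ≤ r * (M + 1) * (2 * m₀) ^ (r - 2) := Nat.mul_le_mul_left _ h3
    _ = r * (M + 1) * 2 ^ (r - 2) * m₀ ^ (r - 2) := by rw [mul_pow]; ring
  calc (T.ncard : ℝ) ≤ ((r * (M + 1) * 2 ^ (r - 2) * m₀ ^ (r - 2) : ℕ) : ℝ) := by
        exact_mod_cast h4
  _ = (r * (M + 1) * 2 ^ (r - 2) : ℕ) * (m₀ : ℝ) ^ (r - 2) := by push_cast; ring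
end
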